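/- arXiv:2201.01084 — 9 statements merged into one kernel-verified Lean document; each statement's English description precedes it below -/
import Mathlib

section
/- Let N ≥ 1 and let M be the N×N real matrix with diagonal entries M_ii = o_i := g_i + d_i·Σ_{j=1}^N a_{ij} and off-diagonal entries M_ij = −d_{ij}·a_{ij} for i ≠ j, where a_{ij} ∈ {0,1} with a_{ii} = 0, g_i ≥ 0, d_i > 0 and d_{ij} > 0. Set r_i := Σ_{j=1}^N d_{ij}·a_{ij}. Suppose there exists a permutation κ of {1,…,N} such that o_{κ(1)} > r_{κ(1)} and o_{κ(i+1)} − o_{κ(i)} > r_{κ(i+1)} + r_{κ(i)} for all i = 1,…,N−1. Then the characteristic polynomial of M has N pairwise distinct roots in ℂ, all of which are positive real numbers; in particular there exist an invertible real N×N matrix V and a real diagonal matrix Λ such that M = V·Λ·V⁻¹. -/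
open Matrix Polynomial

/-!
Let `c₀ < c₁ < ⋯` be the diagonal entries of `M` in the order given by `κ`, with Gershgorin
radii `ρ_k`. The hypotheses say that the Gershgorin intervals `[c_k - ρ_k, c_k + ρ_k]` are
pairwise disjoint and lie in `(0, ∞)`, so one can pick points `0 < x₀ < x₁ < ⋯ < x_N` with
exactly the first `k` intervals to the left of `x_k`. At such a point `x_k I - M` is strictly
diagonally dominant, and a homotopy to its diagonal shows that `charpoly M (x_k)` has the sign of
`∏ᵢ (x_k - c_i)`, which is `(-1)^(N - k)`. By the intermediate value theorem the characteristic
polynomial has a root in each `(x_k, x_{k+1})`: these are `N` distinct positive real roots, hence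
all of its complex roots, and eigenvectors for `N` distinct eigenvalues diagonalize `M`.
-/

theorem mul_pos_of_continuousOn_of_ne_zero {f : ℝ → ℝ} {a b : ℝ} (hab : a ≤ b)
    (hf : ContinuousOn f (Set.Icc a b)) (hf0 : ∀ t ∈ Set.Icc a b, f t ≠ 0) :
    0 < f a * f b := by
  by_contra! h
  have h0 : (0 : ℝ) ∈ Set.uIcc (f a) (f b) := by
    rw [Set.mem_uIcc]
    rcases mul_nonpos_iff.1 h with h | h
    · exact Or.inr ⟨h.2, h.1⟩
    · exact Or.inl h
  rw [← Set.uIcc_of_le hab] at hf hf0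
  obtain ⟨t, ht, hft⟩ := intermediate_value_uIcc hf h0
  exact hf0 t ht hft

theorem exists_mem_Ioo_eq_zero_of_mul_neg {f : ℝ → ℝ} {a b : ℝ} (hab : a ≤ b)
    (hf : ContinuousOn f (Set.Icc a b)) (h : f a * f b < 0) :
    ∃ t ∈ Set.Ioo a b, f t = 0 := by
  by_contra! hne
  refine (mul_pos_of_continuousOn_of_ne_zero hab hf fun t ht => ?_).not_gt h
  rcases ht.1.eq_or_lt with rfl | hat
  · exact left_ne_zero_of_mul h.ne
  rcases ht.2.eq_or_lt with rfl | htb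
  · exact right_ne_zero_of_mul h.ne
  exact hne t ⟨hat, htb⟩

theorem Finset.prod_sub_mul_prod_sub_neg {ι : Type*} [DecidableEq ι] {s : Finset ι}
    {c : ι → ℝ} {x y : ℝ} {i₀ : ι} (hi₀ : i₀ ∈ s) (hx : x < c i₀) (hy : c i₀ < y)
    (hout : ∀ i ∈ s, i ≠ i₀ → c i < x ∨ y < c i) :
    (∏ i ∈ s, (x - c i)) * ∏ i ∈ s, (y - c i) < 0 := by
  rw [← Finset.prod_mul_distrib, ← Finset.mul_prod_erase s _ hi₀]
  refine mul_neg_of_neg_of_pos (mul_neg_of_neg_of_pos (by linarith) (by linarith))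
    (Finset.prod_pos fun i hi => ?_)
  rcases hout i (Finset.mem_of_mem_erase hi) (Finset.ne_of_mem_erase hi) with h | h
  · exact mul_pos (by linarith) (by linarith)
  · exact mul_pos_of_neg_of_neg (by linarith) (by linarith)

theorem Polynomial.exists_strictMono_isRoot_of_sign_changes (p : ℝ[X]) {N : ℕ}
    {x : Fin (N + 1) → ℝ} (hx : StrictMono x)
    (hp : ∀ k : Fin N, p.eval (x k.castSucc) * p.eval (x k.succ) < 0) :
    ∃ L : Fin N → ℝ, StrictMono L ∧ (∀ k, x 0 < L k) ∧ ∀ k, p.IsRoot (L k) := by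
  have hroot : ∀ k : Fin N, ∃ t ∈ Set.Ioo (x k.castSucc) (x k.succ), p.eval t = 0 :=
    fun k => exists_mem_Ioo_eq_zero_of_mul_neg (hx (Fin.castSucc_lt_succ (i := k))).le
      p.continuous.continuousOn (hp k)
  choose L hL hLroot using hroot
  refine ⟨L, fun j k hjk => ?_, fun k => ?_, hLroot⟩
  · calc L j < x j.succ := (hL j).2
      _ ≤ x k.castSucc := hx.monotone (Fin.succ_le_castSucc_iff.2 hjk)
      _ < L k := (hL k).1
  · exact (hx.monotone (Fin.zero_le _)).trans_lt (hL k).1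

theorem Polynomial.roots_eq_map_of_injective {F ι : Type*} [Field F] [Fintype ι] {q : F[X]}
    (hq : q ≠ 0) (hdeg : q.natDegree ≤ Fintype.card ι) {L : ι → F}
    (hL : Function.Injective L) (hroot : ∀ i, q.IsRoot (L i)) :
    q.roots = Finset.univ.val.map L := by
  symm
  refine Multiset.eq_of_le_of_card_le ((Multiset.le_iff_subset
    (Finset.univ.nodup.map hL)).2 fun z hz => ?_) ?_
  · obtain ⟨i, -, rfl⟩ := Multiset.mem_map.1 hz
    exact (mem_roots hq).2 (hroot i)
  · simpa using (card_roots' q).trans hdeg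

theorem add_lt_sub_of_lt_of_chain {N : ℕ} (c ρ : Fin N → ℝ) (hρ : ∀ k, 0 ≤ ρ k)
    (hchain : ∀ i : ℕ, (hi : i + 1 < N) →
      ρ ⟨i + 1, hi⟩ + ρ ⟨i, Nat.lt_of_succ_lt hi⟩ < c ⟨i + 1, hi⟩ - c ⟨i, Nat.lt_of_succ_lt hi⟩)
    (j k : Fin N) (hjk : j < k) : c j + ρ j < c k - ρ k := by
  obtain ⟨k, hk⟩ := k
  induction k with
  | zero => exact absurd (Fin.lt_def.1 hjk) (Nat.not_lt_zero _)
  | succ k ih =>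
    have hstep := hchain k hk
    rcases Nat.lt_succ_iff_lt_or_eq.1 (Fin.lt_def.1 hjk) with h | h
    · linarith [ih (by omega) (Fin.lt_def.2 h), hρ ⟨k, by omega⟩]
    · rw [show j = ⟨k, by omega⟩ from Fin.ext h]
      linarith

theorem exists_separating_points {N : ℕ} (c ρ : Fin N → ℝ) (hpos : ∀ k, 0 < c k - ρ k)
    (hsep : ∀ j k, j < k → c j + ρ j < c k - ρ k) :
    ∃ x : Fin (N + 1) → ℝ, 0 < x 0 ∧
      ∀ k j, (j.castSucc < k → c j + ρ j < x k) ∧ (k ≤ j.castSucc → x k < c j - ρ j) := by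
  have hx : ∀ k : Fin (N + 1), ∃ y,
      (∀ a ∈ insert 0 ((Finset.univ.filter (·.castSucc < k)).image fun j => c j + ρ j), a < y) ∧
      ∀ b ∈ (Finset.univ.filter (k ≤ ·.castSucc)).image (fun j => c j - ρ j), y < b := by
    refine fun k => Finset.exists_between' _ _ ?_
    simp only [Finset.forall_mem_insert, Finset.forall_mem_image, Finset.mem_filter,
      Finset.mem_univ, true_and]
    exact ⟨fun j _ => hpos j, fun i hi j hj =>
      hsep i j (Fin.castSucc_lt_castSucc_iff.1 (hi.trans_le hj))⟩
  choose x hlow hup using hx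
  refine ⟨x, hlow 0 0 (Finset.mem_insert_self _ _), fun k j => ⟨fun h => ?_, fun h => ?_⟩⟩
  · exact hlow k _ (Finset.mem_insert_of_mem (Finset.mem_image_of_mem _ (by simpa using h)))
  · exact hup k _ (Finset.mem_image_of_mem _ (by simpa using h))

namespace Matrix

variable {n : Type*} [Fintype n] [DecidableEq n]

theorem roots_charpoly_map_eq {K F : Type*} [Field K] [Field F] (A : Matrix n n K)
    (f : K →+* F) {L : n → K} (hL : Function.Injective (f ∘ L))
    (hroot : ∀ k, A.charpoly.IsRoot (L k)) :
    (A.charpoly.map f).roots = Finset.univ.val.map (f ∘ L) :=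
  roots_eq_map_of_injective (A.charpoly_monic.map f).ne_zero
    (by rw [A.charpoly_monic.natDegree_map, charpoly_natDegree_eq_dim]) hL
    fun k => (hroot k).map

theorem exists_eq_mul_diagonal_mul_inv {K : Type*} [Field K] (A : Matrix n n K) {L : n → K}
    (hL : Function.Injective L) (hroot : ∀ k, A.charpoly.IsRoot (L k)) :
    ∃ V : Matrix n n K, IsUnit V.det ∧ A = V * diagonal L * V⁻¹ := by
  have hev : ∀ k, Module.End.HasEigenvalue (toLin' A) (L k) := fun k => by
    rw [Module.End.hasEigenvalue_iff_mem_spectrum, spectrum_toLin',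
      mem_spectrum_iff_isRoot_charpoly]
    exact hroot k
  choose v hv using fun k => (hev k).exists_hasEigenvector
  set V : Matrix n n K := of fun i k => v k i
  have hV : IsUnit V.det := (isUnit_iff_isUnit_det V).1 <|
    linearIndependent_cols_iff_isUnit.1 <|
      Module.End.eigenvectors_linearIndependent' _ L hL v hv
  have hAV : A * V = V * diagonal L := by
    ext i k
    have hAv := congrFun (Module.End.mem_eigenspace_iff.1 (hv k).1) i
    simp only [toLin'_apply, Pi.smul_apply, smul_eq_mul, mulVec, dotProduct] at hAv
    rw [mul_apply, mul_diagonal]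
    simpa [V, mul_comm] using hAv
  exact ⟨V, hV, by rw [← hAV, mul_nonsing_inv_cancel_right _ _ hV]⟩

def gershgorinRadius (A : Matrix n n ℝ) (i : n) : ℝ :=
  ∑ j ∈ Finset.univ.erase i, |A i j|

theorem gershgorinRadius_nonneg (A : Matrix n n ℝ) (i : n) : 0 ≤ A.gershgorinRadius i :=
  Finset.sum_nonneg fun _ _ => abs_nonneg _

/-- The sign of the determinant is constant along `t ↦ diag A + t (A - diag A)`, `t ∈ [0, 1]`,
since each of these matrices is strictly diagonally dominant. -/
theorem det_mul_prod_diag_pos (A : Matrix n n ℝ) (h : ∀ k, A.gershgorinRadius k < |A k k|) :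
    0 < A.det * ∏ i, A i i := by
  set D := diagonal fun i => A i i
  set B : ℝ → Matrix n n ℝ := fun t => D + t • (A - D)
  have hB : ∀ t i j, B t i j = if i = j then A i i else t * A i j := by
    intro t i j
    by_cases hij : i = j
    · subst hij; simp [B, D]
    · simp [B, D, hij]
  have hcont : ContinuousOn (fun t => (B t).det) (Set.Icc 0 1) := by fun_prop
  have hne : ∀ t ∈ Set.Icc (0 : ℝ) 1, (B t).det ≠ 0 := fun t ht =>
    det_ne_zero_of_sum_row_lt_diag fun k => by
      calc ∑ j ∈ Finset.univ.erase k, ‖B t k j‖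
          = ∑ j ∈ Finset.univ.erase k, |t| * |A k j| := by
            refine Finset.sum_congr rfl fun j hj => ?_
            rw [hB, if_neg (Finset.ne_of_mem_erase hj).symm, Real.norm_eq_abs, abs_mul]
        _ ≤ A.gershgorinRadius k := by
            refine Finset.sum_le_sum fun j _ => ?_
            exact mul_le_of_le_one_left (abs_nonneg _) (abs_le.2 ⟨by linarith [ht.1], ht.2⟩)
        _ < |A k k| := h k
        _ = ‖B t k k‖ := by rw [hB, if_pos rfl, Real.norm_eq_abs]
  simpa [B, D, mul_comm] using mul_pos_of_continuousOn_of_ne_zero zero_le_one hcont hne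

theorem charpoly_eval_mul_prod_pos (A : Matrix n n ℝ) {x : ℝ}
    (h : ∀ i, A.gershgorinRadius i < |x - A i i|) :
    0 < A.charpoly.eval x * ∏ i, (x - A i i) := by
  have hdiag : ∀ i, (scalar n x - A) i i = x - A i i := fun i => by simp
  have hrad : ∀ i, (scalar n x - A).gershgorinRadius i = A.gershgorinRadius i := fun i =>
    Finset.sum_congr rfl fun j hj => by simp [(Finset.ne_of_mem_erase hj).symm]
  rw [eval_charpoly, ← Finset.prod_congr rfl fun i _ => hdiag i]
  exact det_mul_prod_diag_pos _ fun k => by rw [hrad, hdiag]; exact h k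

theorem exists_strictMono_pos_isRoot_charpoly {N : ℕ} (A : Matrix n n ℝ) (e : Fin N ≃ n)
    (hpos : ∀ k, A.gershgorinRadius (e k) < A (e k) (e k))
    (hsep : ∀ j k, j < k → A (e j) (e j) + A.gershgorinRadius (e j) <
      A (e k) (e k) - A.gershgorinRadius (e k)) :
    ∃ L : Fin N → ℝ, StrictMono L ∧ (∀ k, 0 < L k) ∧ ∀ k, A.charpoly.IsRoot (L k) := by
  set c : Fin N → ℝ := fun k => A (e k) (e k)
  set ρ : Fin N → ℝ := fun k => A.gershgorinRadius (e k)
  have hρ : ∀ k, 0 ≤ ρ k := fun k => A.gershgorinRadius_nonneg _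
  obtain ⟨x, hx0, hx⟩ := exists_separating_points c ρ (fun k => sub_pos.2 (hpos k)) hsep
  have hxk : ∀ k, x k.castSucc < c k - ρ k := fun k => (hx _ k).2 le_rfl
  have hxk' : ∀ k, c k + ρ k < x k.succ := fun k => (hx _ k).1 Fin.castSucc_lt_succ
  have hxmono : StrictMono x := Fin.strictMono_iff_lt_succ.2 fun k => by
    linarith [hxk k, hxk' k, hρ k]
  have hsign : ∀ k, 0 < A.charpoly.eval (x k) * ∏ j, (x k - c j) := fun k => by
    rw [e.prod_comp fun i => x k - A i i]
    refine A.charpoly_eval_mul_prod_pos fun i => ?_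
    obtain ⟨j, rfl⟩ := e.surjective i
    rcases lt_or_ge j.castSucc k with h | h
    · have := (hx k j).1 h
      rw [abs_of_pos (by linarith [hρ j])]; linarith
    · have := (hx k j).2 h
      rw [abs_of_neg (by linarith [hρ j])]; linarith
  have hchange : ∀ k : Fin N, (∏ j, (x k.castSucc - c j)) * ∏ j, (x k.succ - c j) < 0 :=
    fun k => Finset.prod_sub_mul_prod_sub_neg (Finset.mem_univ k)
      (by linarith [hxk k, hρ k]) (by linarith [hxk' k, hρ k]) fun j _ hjk =>
      (lt_or_gt_of_ne hjk).imp
        (fun h => by linarith [(hx k.castSucc j).1 (Fin.castSucc_lt_castSucc_iff.2 h), hρ j])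
        (fun h => by linarith [(hx k.succ j).2 (Fin.succ_le_castSucc_iff.2 h), hρ j])
  obtain ⟨L, hL, hLx, hLroot⟩ := A.charpoly.exists_strictMono_isRoot_of_sign_changes hxmono
    fun k => by nlinarith [hsign k.castSucc, hsign k.succ, hchange k]
  exact ⟨L, hL, fun k => hx0.trans (hLx k), hLroot⟩

end Matrix

theorem stmt_0_general (N : ℕ) (hN : 1 ≤ N)
    (a : Fin N → Fin N → ℝ) (dij : Fin N → Fin N → ℝ)
    (ha : ∀ i j, a i j = 0 ∨ a i j = 1) (haii : ∀ i, a i i = 0)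
    (hdij : ∀ i j, 0 < dij i j)
    (o r : Fin N → ℝ)
    (hr : ∀ i, r i = ∑ j, dij i j * a i j)
    (M : Matrix (Fin N) (Fin N) ℝ)
    (hM : ∀ i j, M i j = if i = j then o i else -(dij i j * a i j))
    (κ : Fin N → Fin N) (hκ : Function.Bijective κ)
    (h1 : r (κ ⟨0, hN⟩) < o (κ ⟨0, hN⟩))
    (h2 : ∀ i : ℕ, (hi : i + 1 < N) →
      r (κ ⟨i + 1, hi⟩) + r (κ ⟨i, Nat.lt_of_succ_lt hi⟩) <
        o (κ ⟨i + 1, hi⟩) - o (κ ⟨i, Nat.lt_of_succ_lt hi⟩)) :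
    ((M.charpoly.map (algebraMap ℝ ℂ)).roots.toFinset.card = N ∧
      ∀ z ∈ (M.charpoly.map (algebraMap ℝ ℂ)).roots, z.im = 0 ∧ 0 < z.re) ∧
    ∃ V Λ : Matrix (Fin N) (Fin N) ℝ, IsUnit V.det ∧
      (∃ l : Fin N → ℝ, Λ = Matrix.diagonal l) ∧ M = V * Λ * V⁻¹ := by
  have hterm : ∀ i j, 0 ≤ dij i j * a i j := fun i j =>
    mul_nonneg (hdij i j).le (by rcases ha i j with h | h <;> simp [h])
  have hdiag : ∀ i, M i i = o i := fun i => by simp [hM]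
  have hrad : ∀ i, M.gershgorinRadius i = r i := fun i => by
    rw [hr, ← Finset.add_sum_erase _ _ (Finset.mem_univ i), haii, mul_zero, zero_add]
    refine Finset.sum_congr rfl fun j hj => ?_
    rw [hM, if_neg (Finset.ne_of_mem_erase hj).symm, abs_neg, abs_of_nonneg (hterm i j)]
  have hr0 : ∀ i, 0 ≤ r i := fun i => hrad i ▸ M.gershgorinRadius_nonneg i
  have hsep := add_lt_sub_of_lt_of_chain (fun k => o (κ k)) (fun k => r (κ k))
    (fun k => hr0 _) h2
  have hpos : ∀ k, r (κ k) < o (κ k) := by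
    rintro ⟨_ | k, hk⟩
    · exact h1
    · linarith [hsep ⟨0, hN⟩ ⟨k + 1, hk⟩ (Fin.lt_def.2 k.succ_pos), hr0 (κ ⟨0, hN⟩)]
  obtain ⟨L, hL, hLpos, hLroot⟩ := M.exists_strictMono_pos_isRoot_charpoly
    (Equiv.ofBijective κ hκ) (by simpa [hdiag, hrad] using hpos)
    (by simpa [hdiag, hrad] using hsep)
  have hinj : Function.Injective (algebraMap ℝ ℂ ∘ L) :=
    (algebraMap ℝ ℂ).injective.comp hL.injective
  have hroots := M.roots_charpoly_map_eq (algebraMap ℝ ℂ) hinj hLroot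
  refine ⟨⟨?_, fun z hz => ?_⟩, ?_⟩
  · rw [hroots, Multiset.toFinset_map, Finset.univ.val_toFinset,
      Finset.card_image_of_injective _ hinj, Finset.card_univ, Fintype.card_fin]
  · obtain ⟨k, -, rfl⟩ := Multiset.mem_map.1 (hroots ▸ hz)
    exact ⟨Complex.ofReal_im _, by simpa using hLpos k⟩
  · obtain ⟨V, hV, hMV⟩ := M.exists_eq_mul_diagonal_mul_inv hL.injective hLroot
    exact ⟨V, _, hV, ⟨L, rfl⟩, hMV⟩

/-- Lemma 1: Under the Geršgorin-disc separation condition, the matrix `M = L_d + P`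
has `N` pairwise distinct eigenvalues, all positive real numbers; in particular
`M` is diagonalizable over `ℝ`. -/
theorem stmt_0 (N : ℕ) (hN : 1 ≤ N)
    (a : Fin N → Fin N → ℝ) (g d : Fin N → ℝ) (dij : Fin N → Fin N → ℝ)
    (ha : ∀ i j, a i j = 0 ∨ a i j = 1) (haii : ∀ i, a i i = 0)
    (hg : ∀ i, 0 ≤ g i) (hd : ∀ i, 0 < d i) (hdij : ∀ i j, 0 < dij i j)
    (o r : Fin N → ℝ)
    (ho : ∀ i, o i = g i + d i * ∑ j, a i j)
    (hr : ∀ i, r i = ∑ j, dij i j * a i j)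
    (M : Matrix (Fin N) (Fin N) ℝ)
    (hM : ∀ i j, M i j = if i = j then o i else -(dij i j * a i j))
    (κ : Fin N → Fin N) (hκ : Function.Bijective κ)
    (h1 : r (κ ⟨0, hN⟩) < o (κ ⟨0, hN⟩))
    (h2 : ∀ i : ℕ, (hi : i + 1 < N) →
      r (κ ⟨i + 1, hi⟩) + r (κ ⟨i, Nat.lt_of_succ_lt hi⟩) <
        o (κ ⟨i + 1, hi⟩) - o (κ ⟨i, Nat.lt_of_succ_lt hi⟩)) :
    ((M.charpoly.map (algebraMap ℝ ℂ)).roots.toFinset.card = N ∧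
      ∀ z ∈ (M.charpoly.map (algebraMap ℝ ℂ)).roots, z.im = 0 ∧ 0 < z.re) ∧
    ∃ V Λ : Matrix (Fin N) (Fin N) ℝ, IsUnit V.det ∧
      (∃ l : Fin N → ℝ, Λ = Matrix.diagonal l) ∧ M = V * Λ * V⁻¹ :=
  stmt_0_general N hN a dij ha haii hdij o r hr M hM κ hκ h1 h2
end

section
/- Let B be an n×n real matrix and for each i let r_i = Σ_{j≠i} |B_ij| and let D_i be the closed disc in ℂ with center B_ii and radius r_i. If the discs D_1,…,D_n are pairwise disjoint, then the characteristic polynomial of B has n pairwise distinct roots in ℂ, all of these roots are real, and exactly one root lies in each disc D_i. -/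
open Matrix Polynomial
open Filter Set

/-- eval of charpoly as a determinant -/
lemma ev_charpoly {n : ℕ} (A : Matrix (Fin n) (Fin n) ℂ) (z : ℂ) :
    A.charpoly.eval z = (z • (1 : Matrix (Fin n) (Fin n) ℂ) - A).det := by
  rw [Matrix.charpoly, ← Polynomial.coe_evalRingHom, RingHom.map_det]
  congr 1
  ext i j
  by_cases h : i = j
  · subst h; simp [Matrix.charmatrix_apply_eq, Matrix.one_apply]
  · simp [Matrix.charmatrix_apply_ne _ _ _ h, Matrix.one_apply, h]

/-- root of charpoly gives eigenvalue -/
lemma root_hasEigenvalue {n : ℕ} (A : Matrix (Fin n) (Fin n) ℂ) (z : ℂ)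
    (h : A.charpoly.IsRoot z) : Module.End.HasEigenvalue (Matrix.toLin' A) z := by
  have hdet : (A - z • 1).det = 0 := by
    have h0 : (z • (1 : Matrix (Fin n) (Fin n) ℂ) - A).det = 0 := by
      rw [← ev_charpoly]; exact h
    have h2 : A - z • 1 = -(z • (1 : Matrix (Fin n) (Fin n) ℂ) - A) := by abel
    rw [h2, Matrix.det_neg, h0, mul_zero]
  obtain ⟨v, hv0, hv⟩ := (Matrix.exists_mulVec_eq_zero_iff).2 hdet
  refine Module.End.hasEigenvalue_of_hasEigenvector (x := v) ⟨?_, hv0⟩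
  rw [Module.End.mem_eigenspace_iff, Matrix.toLin'_apply]
  rw [Matrix.sub_mulVec, sub_eq_zero] at hv
  rw [hv, Matrix.smul_mulVec, Matrix.one_mulVec]

/-- a multiset of card n is the image of a function on `Fin n` -/
lemma exists_ofFn_multiset {α : Type*} :
    ∀ (n : ℕ) (s : Multiset α), Multiset.card s = n → ∃ f : Fin n → α, s = ↑(List.ofFn f) := by
  intro n
  induction n with
  | zero =>
    intro s hs
    refine ⟨Fin.elim0, ?_⟩
    rw [Multiset.card_eq_zero.1 hs]; simp
  | succ n ih =>
    intro s hs
    obtain ⟨a, ha⟩ := Multiset.card_pos_iff_exists_mem.1 (by rw [hs]; omega)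
    obtain ⟨t, rfl⟩ := Multiset.exists_cons_of_mem ha
    have hct : Multiset.card t = n := by
      simpa using hs
    obtain ⟨g, hg⟩ := ih t hct
    refine ⟨Fin.cons a g, ?_⟩
    rw [List.ofFn_succ]
    simp [hg, Fin.cons_succ]

lemma coe_ofFn_eq_map {α : Type*} {n : ℕ} (f : Fin n → α) :
    (↑(List.ofFn f) : Multiset α) = Finset.univ.val.map f := by
  rw [List.ofFn_eq_map]
  rfl

section Main

variable {n : ℕ} (B : Matrix (Fin n) (Fin n) ℝ) (r : Fin n → ℝ) (D : Fin n → Set ℂ)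

/-- the homotopy family of matrices -/
def Mt (t : ℝ) : Matrix (Fin n) (Fin n) ℂ :=
  Matrix.of fun i j => if i = j then ((B i j : ℝ) : ℂ) else (t : ℂ) * B i j

lemma Mt_one : Mt B 1 = B.map (algebraMap ℝ ℂ) := by
  ext i j
  by_cases h : i = j <;> simp [Mt, h]

lemma Mt_zero : Mt B 0 = Matrix.diagonal (fun i => ((B i i : ℝ) : ℂ)) := by
  ext i j
  by_cases h : i = j <;> simp [Mt, h, Matrix.diagonal_apply]

noncomputable def pt (t : ℝ) : Polynomial ℂ := (Mt B t).charpoly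

lemma pt_monic (t : ℝ) : (pt B t).Monic := Matrix.charpoly_monic _

lemma pt_natDegree (t : ℝ) : (pt B t).natDegree = n := by
  rw [pt, Matrix.charpoly_natDegree_eq_dim, Fintype.card_fin]

lemma pt_card_roots (t : ℝ) : Multiset.card (pt B t).roots = n := by
  rw [Polynomial.splits_iff_card_roots.1 (IsAlgClosed.splits _), pt_natDegree]

lemma pt_eval (t : ℝ) (z : ℂ) :
    (pt B t).eval z = (z • (1 : Matrix (Fin n) (Fin n) ℂ) - Mt B t).det :=
  ev_charpoly _ _

/-- Gershgorin: every root of `pt B t`, `0 ≤ t ≤ 1`, lies in some disc. -/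
lemma root_mem_disc (hr : ∀ i, r i = ∑ j ∈ Finset.univ.erase i, |B i j|)
    (hD : ∀ i, D i = Metric.closedBall ((B i i : ℝ) : ℂ) (r i))
    {t : ℝ} (ht : t ∈ Set.Icc (0:ℝ) 1) {z : ℂ} (hz : (pt B t).IsRoot z) :
    ∃ i, z ∈ D i := by
  obtain ⟨k, hk⟩ := eigenvalue_mem_ball (root_hasEigenvalue _ _ hz)
  refine ⟨k, ?_⟩
  rw [hD]
  have hkk : Mt B t k k = ((B k k : ℝ) : ℂ) := by simp [Mt]
  rw [hkk] at hk
  refine Metric.closedBall_subset_closedBall ?_ hk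
  have hsum : ∑ j ∈ Finset.univ.erase k, ‖Mt B t k j‖
      = t * ∑ j ∈ Finset.univ.erase k, |B k j| := by
    rw [Finset.mul_sum]
    refine Finset.sum_congr rfl fun j hj => ?_
    have hjk : k ≠ j := fun h => (Finset.mem_erase.1 hj).1 h.symm
    simp only [Mt, Matrix.of_apply, if_neg hjk]
    rw [norm_mul, Complex.norm_real, Complex.norm_real, Real.norm_eq_abs, Real.norm_eq_abs,
      abs_of_nonneg ht.1]
  rw [hsum, hr]
  have hnn : (0:ℝ) ≤ ∑ j ∈ Finset.univ.erase k, |B k j| :=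
    Finset.sum_nonneg fun j _ => abs_nonneg (B k j)
  nlinarith [ht.1, ht.2]

/-- counting roots in a disc -/
noncomputable def mcnt (i : Fin n) (s : Multiset ℂ) : ℕ :=
  Multiset.card (@Multiset.filter ℂ (· ∈ D i) (Classical.decPred _) s)

lemma mcnt_map (i : Fin n) (c : Fin n → ℂ) (s : Multiset (Fin n)) :
    mcnt D i (s.map c) =
      Multiset.card (@Multiset.filter (Fin n) (fun j => c j ∈ D i) (Classical.decPred _) s) := by
  rw [mcnt, Multiset.filter_map, Multiset.card_map]
  congr 1

lemma mcnt_congr (i : Fin n) (f g : Fin n → ℂ)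
    (h : ∀ j, (f j ∈ D i ↔ g j ∈ D i)) :
    mcnt D i ↑(List.ofFn f) = mcnt D i ↑(List.ofFn g) := by
  rw [coe_ofFn_eq_map, coe_ofFn_eq_map, mcnt_map, mcnt_map]
  congr 1
  exact @Multiset.filter_congr _ _ _ (Classical.decPred _) (Classical.decPred _)
    _ (fun j _ => h j)

end Main

section Main2
variable {n : ℕ} (B : Matrix (Fin n) (Fin n) ℝ) (r : Fin n → ℝ) (D : Fin n → Set ℂ)

lemma eval_prod_of_roots (t : ℝ) (f : Fin n → ℂ) (h : (pt B t).roots = ↑(List.ofFn f))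
    (z : ℂ) : (pt B t).eval z = ∏ j, (z - f j) := by
  conv_lhs => rw [Polynomial.Splits.eq_prod_roots_of_monic (IsAlgClosed.splits _) (pt_monic B t)]
  rw [h, coe_ofFn_eq_map, Multiset.map_map]
  have h2 : ((Finset.univ.val.map fun j => X - C (f j))).prod
      = ∏ j, (X - C (f j)) := rfl
  rw [Function.comp_def, h2, eval_prod]
  simp

lemma roots_of_prod (a : Fin n → ℂ) :
    (∏ j, (X - C (a j))).roots = ↑(List.ofFn a) := by
  have h2 : (∏ j, (X - C (a j)))
      = ((Finset.univ.val.map a).map fun x => X - C x).prod := by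
    rw [Multiset.map_map]; rfl
  rw [h2, Polynomial.roots_multiset_prod_X_sub_C, coe_ofFn_eq_map]

lemma exists_roots_fn (t : ℝ) : ∃ f : Fin n → ℂ, (pt B t).roots = ↑(List.ofFn f) :=
  exists_ofFn_multiset n _ (pt_card_roots B t)

lemma cont_det (z : ℂ) :
    Continuous fun s : ℝ => (z • (1 : Matrix (Fin n) (Fin n) ℂ) - Mt B s).det := by
  apply Continuous.matrix_det
  apply continuous_matrix
  intro i j
  by_cases h : i = j
  · subst h
    have : (fun s : ℝ => (z • (1 : Matrix (Fin n) (Fin n) ℂ) - Mt B s) i i)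
        = fun _ => z - ((B i i : ℝ) : ℂ) := by
      funext s; simp [Mt, Matrix.one_apply]
    rw [this]; exact continuous_const
  · have : (fun s : ℝ => (z • (1 : Matrix (Fin n) (Fin n) ℂ) - Mt B s) i j)
        = fun s : ℝ => -((s : ℂ) * B i j) := by
      funext s; simp [Mt, Matrix.one_apply, h]
    rw [this]
    exact (Complex.continuous_ofReal.mul continuous_const).neg

lemma mem_coe_ofFn (f : Fin n → ℂ) (j : Fin n) : f j ∈ (↑(List.ofFn f) : Multiset ℂ) := by
  rw [coe_ofFn_eq_map]
  exact Multiset.mem_map_of_mem f (Finset.mem_univ_val _)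

lemma K_compact (hD : ∀ i, D i = Metric.closedBall ((B i i : ℝ) : ℂ) (r i)) :
    IsCompact (⋃ i, D i) :=
  isCompact_iUnion fun i => by rw [hD]; exact isCompact_closedBall _ _

lemma D_closed (hD : ∀ i, D i = Metric.closedBall ((B i i : ℝ) : ℂ) (r i)) (i : Fin n) :
    IsClosed (D i) := by rw [hD]; exact Metric.isClosed_closedBall

end Main2

section Main3
variable {n : ℕ} (B : Matrix (Fin n) (Fin n) ℝ) (r : Fin n → ℝ) (D : Fin n → Set ℂ)

lemma key_subseq (hr : ∀ i, r i = ∑ j ∈ Finset.univ.erase i, |B i j|)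
    (hD : ∀ i, D i = Metric.closedBall ((B i i : ℝ) : ℂ) (r i))
    (hdisj : ∀ i j, i ≠ j → Disjoint (D i) (D j))
    {t : ℝ} (ht : t ∈ Set.Icc (0:ℝ) 1) {u : ℕ → ℝ} (hu : ∀ k, u k ∈ Set.Icc (0:ℝ) 1)
    (hlim : Tendsto u atTop (nhds t)) :
    ∃ φ : ℕ → ℕ, StrictMono φ ∧
      ∀ i, ∀ᶠ k in atTop, mcnt D i (pt B (u (φ k))).roots = mcnt D i (pt B t).roots := by
  classical
  choose W hW using fun k => exists_roots_fn B (u k)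
  have hWK : ∀ k j, W k j ∈ ⋃ i, D i := by
    intro k j
    have hmem : W k j ∈ (pt B (u k)).roots := by
      rw [hW k]; exact mem_coe_ofFn _ _
    have hroot : (pt B (u k)).IsRoot (W k j) := (Polynomial.mem_roots'.1 hmem).2
    obtain ⟨i, hi⟩ := root_mem_disc B r D hr hD (hu k) hroot
    exact Set.mem_iUnion.2 ⟨i, hi⟩
  have hS : IsCompact (Set.univ.pi fun _ : Fin n => (⋃ i, D i)) :=
    isCompact_univ_pi fun _ => K_compact B r D hD
  obtain ⟨a, haS, φ, hφ, hconv⟩ :=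
    hS.tendsto_subseq (x := W) (fun k => Set.mem_univ_pi.2 fun j => hWK k j)
  have hconvj : ∀ j, Tendsto (fun k => W (φ k) j) atTop (nhds (a j)) := by
    rw [tendsto_pi_nhds] at hconv
    exact fun j => hconv j
  have hut : Tendsto (fun k => u (φ k)) atTop (nhds t) := hlim.comp hφ.tendsto_atTop
  have hroots_t : (pt B t).roots = ↑(List.ofFn a) := by
    have hpt : pt B t = ∏ j, (X - C (a j)) := by
      apply Polynomial.funext
      intro z
      have h1 : Tendsto (fun k => (pt B (u (φ k))).eval z) atTop (nhds ((pt B t).eval z)) := by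
        simp only [pt_eval]
        exact ((cont_det B z).tendsto t).comp hut
      have h3 : Tendsto (fun k => ∏ j, (z - W (φ k) j)) atTop (nhds (∏ j, (z - a j))) :=
        tendsto_finset_prod _ fun j _ => tendsto_const_nhds.sub (hconvj j)
      have h4 : (pt B t).eval z = ∏ j, (z - a j) := by
        refine tendsto_nhds_unique (h1.congr fun k => ?_) h3
        exact eval_prod_of_roots B _ _ (hW (φ k)) z
      rw [h4, eval_prod]
      simp
    rw [hpt, roots_of_prod]
  have hai : ∀ j, ∃ i, a j ∈ D i := by
    intro j
    have hmem : a j ∈ (pt B t).roots := by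
      rw [hroots_t]; exact mem_coe_ofFn _ _
    exact root_mem_disc B r D hr hD ht (Polynomial.mem_roots'.1 hmem).2
  choose i0 hi0 using hai
  have hev : ∀ j, ∀ᶠ k in atTop,
      (W (φ k) j ∈ D (i0 j) ∧ ∀ i, i ≠ i0 j → W (φ k) j ∉ D i) := by
    intro j
    set Uc : Set ℂ := ⋃ i ∈ Finset.univ.erase (i0 j), D i with hUcdef
    have hUcClosed : IsClosed Uc :=
      isClosed_biUnion_finset fun i _ => D_closed B r D hD i
    have haU : a j ∉ Uc := by
      rw [hUcdef]
      simp only [Set.mem_iUnion]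
      rintro ⟨i, hi, hmem⟩
      have hne : i ≠ i0 j := (Finset.mem_erase.1 hi).1
      exact Set.disjoint_left.1 (hdisj i (i0 j) hne) hmem (hi0 j)
    have hnhds : Ucᶜ ∈ nhds (a j) := hUcClosed.isOpen_compl.mem_nhds haU
    have hevc : ∀ᶠ k in atTop, W (φ k) j ∈ Ucᶜ := (hconvj j).eventually hnhds
    filter_upwards [hevc] with k hk
    obtain ⟨i, hi⟩ := Set.mem_iUnion.1 (hWK (φ k) j)
    have hii : i = i0 j := by
      by_contra hne
      exact hk (Set.mem_biUnion (Finset.mem_erase.2 ⟨hne, Finset.mem_univ i⟩) hi)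
    subst hii
    refine ⟨hi, fun i' hi' hmem' => ?_⟩
    exact hk (Set.mem_biUnion (Finset.mem_erase.2 ⟨hi', Finset.mem_univ i'⟩) hmem')
  refine ⟨φ, hφ, fun i => ?_⟩
  have hall : ∀ᶠ k in atTop, ∀ j,
      (W (φ k) j ∈ D (i0 j) ∧ ∀ i', i' ≠ i0 j → W (φ k) j ∉ D i') :=
    eventually_all.2 hev
  filter_upwards [hall] with k hk
  rw [hW (φ k), hroots_t]
  apply mcnt_congr
  intro j
  obtain ⟨h1, h2⟩ := hk j
  by_cases hji : i = i0 j
  · subst hji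
    exact iff_of_true h1 (hi0 j)
  · refine iff_of_false (h2 i hji) fun hmem => ?_
    exact Set.disjoint_left.1 (hdisj i (i0 j) hji) hmem (hi0 j)

end Main3

section Main4
variable {n : ℕ} (B : Matrix (Fin n) (Fin n) ℝ) (r : Fin n → ℝ) (D : Fin n → Set ℂ)

lemma mcnt_one_eq_zero (hr : ∀ i, r i = ∑ j ∈ Finset.univ.erase i, |B i j|)
    (hD : ∀ i, D i = Metric.closedBall ((B i i : ℝ) : ℂ) (r i))
    (hdisj : ∀ i j, i ≠ j → Disjoint (D i) (D j)) (i : Fin n) :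
    mcnt D i (pt B 1).roots = mcnt D i (pt B 0).roots := by
  set g : Set.Icc (0:ℝ) 1 → ℕ := fun x => mcnt D i (pt B ↑x).roots with hg
  have hcont : Continuous g := by
    rw [continuous_iff_seqContinuous]
    intro x t hx
    apply tendsto_of_subseq_tendsto
    intro ns hns
    have hlim : Tendsto (fun k => ((x (ns k) : Set.Icc (0:ℝ) 1) : ℝ)) atTop (nhds (t : ℝ)) :=
      (continuous_subtype_val.tendsto t).comp (hx.comp hns)
    obtain ⟨φ, hφ, hev⟩ := key_subseq B r D hr hD hdisj t.2
      (u := fun k => ((x (ns k) : Set.Icc (0:ℝ) 1) : ℝ)) (fun k => (x (ns k)).2) hlim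
    refine ⟨φ, ?_⟩
    exact tendsto_const_nhds.congr' ((hev i).mono fun k hk => hk.symm)
  have hpre : PreconnectedSpace (Set.Icc (0:ℝ) 1) := Subtype.preconnectedSpace isPreconnected_Icc
  have h0 : (0:ℝ) ∈ Set.Icc (0:ℝ) 1 := by norm_num
  have h1 : (1:ℝ) ∈ Set.Icc (0:ℝ) 1 := by norm_num
  have hclopen : IsClopen (g ⁻¹' {g ⟨0, h0⟩}) := (isClopen_discrete _).preimage hcont
  rcases isClopen_iff.1 hclopen with h | h
  · have h00 : (⟨0, h0⟩ : Set.Icc (0:ℝ) 1) ∈ g ⁻¹' {g ⟨0, h0⟩} := rfl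
    rw [h] at h00
    exact absurd h00 (Set.notMem_empty _)
  · have h1m : (⟨1, h1⟩ : Set.Icc (0:ℝ) 1) ∈ g ⁻¹' {g ⟨0, h0⟩} := by
      rw [h]; trivial
    have h1e := Set.mem_singleton_iff.1 (Set.mem_preimage.1 h1m)
    simpa [hg] using h1e

lemma mcnt_zero_val (hr : ∀ i, r i = ∑ j ∈ Finset.univ.erase i, |B i j|)
    (hD : ∀ i, D i = Metric.closedBall ((B i i : ℝ) : ℂ) (r i))
    (hdisj : ∀ i j, i ≠ j → Disjoint (D i) (D j)) (i : Fin n) :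
    mcnt D i (pt B 0).roots = 1 := by
  classical
  have hrnn : ∀ j, 0 ≤ r j := by
    intro j
    rw [hr]
    exact Finset.sum_nonneg fun l _ => abs_nonneg _
  have hcenter : ∀ j, ((B j j : ℝ) : ℂ) ∈ D j := by
    intro j
    rw [hD]
    exact Metric.mem_closedBall_self (hrnn j)
  have hroots : (pt B 0).roots = Finset.univ.val.map (fun j => ((B j j : ℝ) : ℂ)) := by
    rw [pt, Mt_zero]
    rw [Matrix.charpoly_of_upperTriangular _ (Matrix.blockTriangular_diagonal _)]
    have h2 : (∏ j, (X - C ((B j j : ℝ) : ℂ)))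
        = ((Finset.univ.val.map (fun j => ((B j j : ℝ) : ℂ))).map fun x => X - C x).prod := by
      rw [Multiset.map_map]; rfl
    simp only [Matrix.diagonal_apply_eq]
    rw [h2, Polynomial.roots_multiset_prod_X_sub_C]
  rw [hroots, mcnt_map]
  have hiff : ∀ j, (((B j j : ℝ) : ℂ) ∈ D i ↔ j = i) := by
    intro j
    constructor
    · intro h
      by_contra hne
      exact Set.disjoint_left.1 (hdisj j i hne) (hcenter j) h
    · rintro rfl
      exact hcenter j
  have hfeq : @Multiset.filter (Fin n) (fun j => ((B j j : ℝ) : ℂ) ∈ D i)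
        (Classical.decPred _) Finset.univ.val
      = Multiset.filter (fun j => j = i) Finset.univ.val := by
    refine @Multiset.filter_congr _ _ _ (Classical.decPred _) _ _ (fun j _ => hiff j)
  rw [hfeq]
  have : Multiset.filter (fun j => j = i) Finset.univ.val
      = Multiset.filter (fun j => i = j) Finset.univ.val := by
    apply Multiset.filter_congr
    exact fun j _ => eq_comm
  rw [this, ← Multiset.count_eq_card_filter_eq]
  exact Multiset.count_eq_one_of_mem Finset.univ.nodup (Finset.mem_univ_val i)

end Main4

/-- Geršgorin disc theorem for real matrices with pairwise disjoint discs: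
the characteristic polynomial has `n` pairwise distinct roots in `ℂ`, all real,
and exactly one root lies in each disc. -/
theorem stmt_1 (n : ℕ) (B : Matrix (Fin n) (Fin n) ℝ)
    (r : Fin n → ℝ) (hr : ∀ i, r i = ∑ j ∈ Finset.univ.erase i, |B i j|)
    (D : Fin n → Set ℂ) (hD : ∀ i, D i = Metric.closedBall ((B i i : ℝ) : ℂ) (r i))
    (hdisj : ∀ i j, i ≠ j → Disjoint (D i) (D j)) :
    (B.charpoly.map (algebraMap ℝ ℂ)).roots.toFinset.card = n ∧
    (∀ z ∈ (B.charpoly.map (algebraMap ℝ ℂ)).roots, z.im = 0) ∧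
    (∀ i, ∃! z : ℂ, z ∈ (B.charpoly.map (algebraMap ℝ ℂ)).roots ∧ z ∈ D i) := by
  classical
  have hp1 : B.charpoly.map (algebraMap ℝ ℂ) = pt B 1 := by
    rw [pt, Mt_one, Matrix.charpoly_map]
  rw [hp1]
  have hcard : Multiset.card (pt B 1).roots = n := pt_card_roots B 1
  have h1mem : ∀ z ∈ (pt B 1).roots, ∃ i, z ∈ D i := fun z hz =>
    root_mem_disc B r D hr hD (Set.mem_Icc.2 ⟨zero_le_one, le_refl 1⟩)
      (Polynomial.mem_roots'.1 hz).2
  have hone : ∀ i, Multiset.card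
      (@Multiset.filter ℂ (· ∈ D i) (Classical.decPred _) (pt B 1).roots) = 1 := by
    intro i
    have h := (mcnt_one_eq_zero B r D hr hD hdisj i).trans (mcnt_zero_val B r D hr hD hdisj i)
    rw [mcnt] at h
    convert h using 3
  have huniq : ∀ i z w, z ∈ (pt B 1).roots → w ∈ (pt B 1).roots →
      z ∈ D i → w ∈ D i → z = w := by
    intro i z w hz hw hzD hwD
    by_contra hne
    have hzf : z ∈ @Multiset.filter ℂ (· ∈ D i) (Classical.decPred _) (pt B 1).roots :=
      Multiset.mem_filter.2 ⟨hz, hzD⟩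
    have hwf : w ∈ @Multiset.filter ℂ (· ∈ D i) (Classical.decPred _) (pt B 1).roots :=
      Multiset.mem_filter.2 ⟨hw, hwD⟩
    have hsub : ({z, w} : Finset ℂ) ⊆
        (@Multiset.filter ℂ (· ∈ D i) (Classical.decPred _) (pt B 1).roots).toFinset := by
      intro x hx
      rcases Finset.mem_insert.1 hx with rfl | hx
      · exact Multiset.mem_toFinset.2 hzf
      · rw [Finset.mem_singleton.1 hx]
        exact Multiset.mem_toFinset.2 hwf
    have h2 : 2 ≤
        (@Multiset.filter ℂ (· ∈ D i) (Classical.decPred _) (pt B 1).roots).toFinset.card := by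
      rw [← Finset.card_pair hne]
      exact Finset.card_le_card hsub
    have h3 := Multiset.toFinset_card_le
      (@Multiset.filter ℂ (· ∈ D i) (Classical.decPred _) (pt B 1).roots)
    have h4 := hone i
    omega
  have hnodup : (pt B 1).roots.Nodup := by
    rw [Multiset.nodup_iff_count_le_one]
    intro z
    by_cases hz : z ∈ (pt B 1).roots
    · obtain ⟨i, hi⟩ := h1mem z hz
      have hcle : (pt B 1).roots.count z ≤ Multiset.card
          (@Multiset.filter ℂ (· ∈ D i) (Classical.decPred _) (pt B 1).roots) := by
        rw [Multiset.count_eq_card_filter_eq]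
        refine Multiset.card_le_card (Multiset.monotone_filter_right _ ?_)
        intro x hx
        rw [← hx]
        exact hi
      exact hcle.trans_eq (hone i)
    · rw [Multiset.count_eq_zero_of_notMem hz]
      omega
  have hconj : ∀ z ∈ (pt B 1).roots, (starRingEnd ℂ) z ∈ (pt B 1).roots := by
    intro z hz
    have hev : ∀ w : ℂ, (pt B 1).eval w = Polynomial.aeval w B.charpoly := by
      intro w
      rw [← hp1, Polynomial.eval_map, Polynomial.aeval_def]
    refine Polynomial.mem_roots'.2 ⟨(Polynomial.mem_roots'.1 hz).1, ?_⟩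
    have hroot := (Polynomial.mem_roots'.1 hz).2
    rw [Polynomial.IsRoot] at hroot ⊢
    rw [hev] at hroot ⊢
    rw [Polynomial.aeval_conj, hroot, map_zero]
  have hDconj : ∀ i (z : ℂ), z ∈ D i → (starRingEnd ℂ) z ∈ D i := by
    intro i z hz
    rw [hD] at hz ⊢
    rw [Metric.mem_closedBall] at hz ⊢
    calc dist ((starRingEnd ℂ) z) ((B i i : ℝ) : ℂ)
        = dist ((starRingEnd ℂ) z) ((starRingEnd ℂ) ((B i i : ℝ) : ℂ)) := by
          rw [Complex.conj_ofReal]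
      _ = dist z ((B i i : ℝ) : ℂ) := Complex.dist_conj_conj _ _
      _ ≤ r i := hz
  refine ⟨?_, ?_, ?_⟩
  · rw [Multiset.toFinset_card_of_nodup hnodup, hcard]
  · intro z hz
    obtain ⟨i, hi⟩ := h1mem z hz
    have heq := huniq i z ((starRingEnd ℂ) z) hz (hconj z hz) hi (hDconj i z hi)
    exact Complex.conj_eq_iff_im.1 heq.symm
  · intro i
    have hpos : 0 < Multiset.card
        (@Multiset.filter ℂ (· ∈ D i) (Classical.decPred _) (pt B 1).roots) := by
      rw [hone i]; omega
    obtain ⟨z, hzf⟩ := Multiset.card_pos_iff_exists_mem.1 hpos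
    obtain ⟨hz1, hz2⟩ := Multiset.mem_filter.1 hzf
    refine ⟨z, ⟨hz1, hz2⟩, ?_⟩
    rintro w ⟨hw1, hw2⟩
    exact huniq i w z hw1 hz1 hw2 hz2
end

section
/- Let B be an n×n complex matrix and for each i let r_i = Σ_{j≠i} |B_ij| and let D_i be the closed disc in ℂ with center B_ii and radius r_i. If the discs D_1,…,D_n are pairwise disjoint, then each disc D_i contains exactly one root of the characteristic polynomial of B counted with multiplicity; in particular B has n pairwise distinct eigenvalues. -/
open Matrix Polynomial Filter
open scoped Classical Topology
set_option maxHeartbeats 1000000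

lemma aux_eval_charpoly {n : ℕ} (M : Matrix (Fin n) (Fin n) ℂ) (z : ℂ) :
    M.charpoly.eval z = (z • (1 : Matrix (Fin n) (Fin n) ℂ) - M).det := by
  rw [Matrix.charpoly, ← Polynomial.coe_evalRingHom, RingHom.map_det]
  congr 1
  ext i j
  by_cases h : i = j
  · subst h
    simp [Matrix.charmatrix_apply_eq, Matrix.one_apply]
  · simp [Matrix.charmatrix_apply_ne _ _ _ h, Matrix.one_apply, h]

lemma aux_root_mem {n : ℕ} (M : Matrix (Fin n) (Fin n) ℂ) (z : ℂ)
    (hz : M.charpoly.IsRoot z) :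
    ∃ i, z ∈ Metric.closedBall (M i i) (∑ j ∈ Finset.univ.erase i, ‖M i j‖) := by
  have hdet : (z • (1 : Matrix (Fin n) (Fin n) ℂ) - M).det = 0 := by
    rw [← aux_eval_charpoly]; exact hz
  obtain ⟨v, hv, hmv⟩ := (Matrix.exists_mulVec_eq_zero_iff).mpr hdet
  have hMv : M.mulVec v = z • v := by
    have h0 : (z • (1 : Matrix (Fin n) (Fin n) ℂ)).mulVec v - M.mulVec v = 0 := by
      rw [← Matrix.sub_mulVec]; exact hmv
    have h1 := sub_eq_zero.mp h0
    rw [← h1, Matrix.smul_mulVec, Matrix.one_mulVec]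
  refine eigenvalue_mem_ball ?_
  refine Module.End.hasEigenvalue_of_hasEigenvector ⟨?_, hv⟩
  rw [Module.End.mem_eigenspace_iff, Matrix.toLin'_apply, hMv]

lemma aux_limit_root {n : ℕ} (A : ℝ → Matrix (Fin n) (Fin n) ℂ)
    (hg : Continuous fun p : (Set.Icc (0:ℝ) 1) × ℂ => (p.2 • (1 : Matrix (Fin n) (Fin n) ℂ) - A p.1.1).det)
    (K : Set ℂ) (hK : IsCompact K)
    (x : ℕ → Set.Icc (0:ℝ) 1) (a : Set.Icc (0:ℝ) 1) (hlim : Tendsto x atTop (𝓝 a))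
    (z : ℕ → ℂ) (hz1 : ∀ k, (A (x k).1).charpoly.IsRoot (z k)) (hz2 : ∀ k, z k ∈ K) :
    ∃ w ∈ K, (A a.1).charpoly.IsRoot w := by
  obtain ⟨w, hwK, φ, hφ, hzlim⟩ := hK.tendsto_subseq hz2
  refine ⟨w, hwK, ?_⟩
  have h1 : Tendsto (fun k => (x (φ k), z (φ k))) atTop (𝓝 (a, w)) :=
    (hlim.comp hφ.tendsto_atTop).prodMk_nhds hzlim
  have hc := (hg.tendsto (a, w)).comp h1
  have hconst : ∀ k, (fun p : (Set.Icc (0:ℝ) 1) × ℂ =>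
      (p.2 • (1 : Matrix (Fin n) (Fin n) ℂ) - A p.1.1).det) (x (φ k), z (φ k)) = 0 := by
    intro k
    show (z (φ k) • (1 : Matrix (Fin n) (Fin n) ℂ) - A (x (φ k)).1).det = 0
    rw [← aux_eval_charpoly]
    exact hz1 (φ k)
  have h0 : Tendsto (fun k => (fun p : (Set.Icc (0:ℝ) 1) × ℂ =>
      (p.2 • (1 : Matrix (Fin n) (Fin n) ℂ) - A p.1.1).det) (x (φ k), z (φ k))) atTop (𝓝 0) := by
    simp only [hconst]
    exact tendsto_const_nhds
  have := tendsto_nhds_unique hc h0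
  show (A a.1).charpoly.eval w = 0
  rw [aux_eval_charpoly]
  exact this

lemma aux_root_near (q : ℂ[X]) (hq : q.Monic) (z : ℂ) (ε : ℝ)
    (hε : 0 < ε) (h : ‖q.eval z‖ < ε ^ q.natDegree) :
    ∃ w ∈ q.roots, ‖z - w‖ < ε := by
  by_contra hcon
  push_neg at hcon
  have hsplit : q.Splits := IsAlgClosed.splits q
  have hcard : Multiset.card q.roots = q.natDegree :=
    (Polynomial.splits_iff_card_roots.mp hsplit)
  have hq' : q = (q.roots.map fun w => X - C w).prod :=
    hsplit.eq_prod_roots_of_monic hq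
  have heval : q.eval z = (q.roots.map fun w => z - w).prod := by
    conv_lhs => rw [hq']
    rw [Polynomial.eval_multiset_prod, Multiset.map_map]
    congr 1
    apply Multiset.map_congr rfl
    intro w _
    simp
  have habs : ‖q.eval z‖ = (q.roots.map fun w => ‖z - w‖).prod := by
    rw [heval, show ∀ m : Multiset ℂ, ‖m.prod‖ = (normHom : ℂ →*₀ ℝ) m.prod from fun _ => rfl,
      map_multiset_prod (normHom : ℂ →*₀ ℝ), Multiset.map_map]
    rfl
  have hle : ε ^ q.natDegree ≤ ‖q.eval z‖ := by
    rw [habs, ← hcard]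
    have := Multiset.prod_map_le_prod_map₀ (s := q.roots) (fun _ => ε)
      (fun w => ‖z - w‖) (fun _ _ => le_of_lt hε) (fun w hw => hcon w hw)
    calc ε ^ Multiset.card q.roots = (q.roots.map fun _ => ε).prod := by
          rw [Multiset.map_const', Multiset.prod_replicate]
      _ ≤ _ := this
  exact absurd h (not_lt.mpr hle)

lemma aux_sum_filter {n : ℕ} (D : Fin n → Set ℂ) (R : Multiset ℂ)
    (h : ∀ z ∈ R, ∃! i, z ∈ D i) :
    ∑ i, Multiset.card (R.filter (fun z => z ∈ D i)) = Multiset.card R := by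
  induction R using Multiset.induction with
  | empty => simp
  | cons a s ih =>
    obtain ⟨i0, hi0, huniq⟩ := h a (Multiset.mem_cons_self a s)
    have hs : ∀ z ∈ s, ∃! i, z ∈ D i := fun z hz => h z (Multiset.mem_cons_of_mem hz)
    have key : ∀ i, Multiset.card ((a ::ₘ s).filter (fun z => z ∈ D i)) =
        Multiset.card (s.filter (fun z => z ∈ D i)) + (if i = i0 then 1 else 0) := by
      intro i
      by_cases hai : a ∈ D i
      · rw [Multiset.filter_cons_of_pos _ hai, Multiset.card_cons,
          if_pos (huniq i hai)]
      · rw [Multiset.filter_cons_of_neg _ hai, if_neg, add_zero]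
        rintro rfl
        exact hai hi0
    simp only [key, Finset.sum_add_distrib, ih hs, Finset.sum_ite_eq' Finset.univ i0,
      Finset.mem_univ, if_pos, Multiset.card_cons]

/-- Geršgorin disc theorem for complex matrices with pairwise disjoint discs:
each disc contains exactly one root of the characteristic polynomial counted with
multiplicity; in particular the matrix has `n` pairwise distinct eigenvalues. -/
theorem stmt_2 (n : ℕ) (B : Matrix (Fin n) (Fin n) ℂ)
    (r : Fin n → ℝ) (hr : ∀ i, r i = ∑ j ∈ Finset.univ.erase i, ‖B i j‖)
    (D : Fin n → Set ℂ) (hD : ∀ i, D i = Metric.closedBall (B i i) (r i))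
    (hdisj : ∀ i j, i ≠ j → Disjoint (D i) (D j)) :
    (∀ i, Multiset.card (B.charpoly.roots.filter (fun z => z ∈ D i)) = 1) ∧
    B.charpoly.roots.toFinset.card = n := by
  have hrnn : ∀ i, 0 ≤ r i := by
    intro i; rw [hr]; positivity
  -- the homotopy of matrices
  set A : ℝ → Matrix (Fin n) (Fin n) ℂ :=
    fun t => Matrix.of fun i j => if i = j then B i j else (t : ℂ) * B i j with hAdef
  have hA1 : A 1 = B := by
    ext i j; by_cases h : i = j <;> simp [hAdef, h]
  have hdiag : ∀ t i, A t i i = B i i := by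
    intro t i; simp [hAdef]
  -- uniqueness of the disc containing a point
  have huniq : ∀ z (i j : Fin n), z ∈ D i → z ∈ D j → i = j := by
    intro z i j hi hj
    by_contra hij
    exact Set.disjoint_left.mp (hdisj i j hij) hi hj
  -- Gershgorin: all roots of charpoly (A t) lie in the discs, for t ∈ [0,1]
  have hroot_mem : ∀ t ∈ Set.Icc (0:ℝ) 1, ∀ z, (A t).charpoly.IsRoot z → ∃ i, z ∈ D i := by
    intro t ht z hz
    obtain ⟨i, hi⟩ := aux_root_mem (A t) z hz
    refine ⟨i, ?_⟩
    rw [hD]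
    have hrad : ∑ j ∈ Finset.univ.erase i, ‖A t i j‖ ≤ r i := by
      have hcalc : ∑ j ∈ Finset.univ.erase i, ‖A t i j‖
          = |t| * ∑ j ∈ Finset.univ.erase i, ‖B i j‖ := by
        rw [Finset.mul_sum]
        apply Finset.sum_congr rfl
        intro j hj
        have hij : ¬ (i = j) := fun h => (Finset.mem_erase.mp hj).1 h.symm
        simp [hAdef, hij, _root_.map_mul]
      rw [hcalc, hr]
      have habs : |t| ≤ 1 := abs_le.mpr ⟨by linarith [ht.1], ht.2⟩
      have hnn : (0:ℝ) ≤ ∑ j ∈ Finset.univ.erase i, ‖B i j‖ := by positivity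
      nlinarith
    have hi' : z ∈ Metric.closedBall (B i i) (∑ j ∈ Finset.univ.erase i, ‖A t i j‖) := by
      rwa [hdiag t i] at hi
    exact Metric.closedBall_subset_closedBall hrad hi'
  -- number of roots
  have hmonic : ∀ t, (A t).charpoly.Monic := fun t => Matrix.charpoly_monic _
  have hdeg : ∀ t, (A t).charpoly.natDegree = n := by
    intro t
    rw [Matrix.charpoly_natDegree_eq_dim, Fintype.card_fin]
  have hcard : ∀ t, Multiset.card (A t).charpoly.roots = n := by
    intro t
    rw [Polynomial.splits_iff_card_roots.mp (IsAlgClosed.splits _), hdeg]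
  -- the counting function on [0,1]
  set I01 := Set.Icc (0:ℝ) 1 with hI01
  set N : Fin n → I01 → ℕ :=
    fun i t => Multiset.card ((A t.1).charpoly.roots.filter (fun z => z ∈ D i)) with hNdef
  have hsum : ∀ t : I01, ∑ i, N i t = n := by
    intro t
    rw [hNdef]
    rw [aux_sum_filter D _ ?_, hcard]
    intro z hz
    have hzr : (A t.1).charpoly.IsRoot z := (Polynomial.mem_roots'.mp hz).2
    obtain ⟨i, hi⟩ := hroot_mem t.1 t.2 z hzr
    exact ⟨i, hi, fun j hj => huniq z j i hj hi⟩
  -- continuity of the determinant function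
  have hg : Continuous (fun p : I01 × ℂ =>
      (p.2 • (1 : Matrix (Fin n) (Fin n) ℂ) - A p.1.1).det) := by
    apply Continuous.matrix_det
    apply continuous_matrix
    intro i j
    simp only [Matrix.sub_apply, Matrix.smul_apply, Matrix.one_apply, hAdef,
      Matrix.of_apply, smul_eq_mul]
    split_ifs with h
    · fun_prop
    · fun_prop
  -- the set S
  set S : Set I01 := {t : I01 | ∀ i, 1 ≤ N i t} with hSdef
  have hzero : (0:ℝ) ∈ I01 := by constructor <;> norm_num
  have hone : (1:ℝ) ∈ I01 := by constructor <;> norm_num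
  -- S contains 0
  have hS0 : (⟨0, hzero⟩ : I01) ∈ S := by
    intro i
    have hA0 : A 0 = Matrix.diagonal (fun i => B i i) := by
      ext i j; by_cases h : i = j <;> simp [hAdef, Matrix.diagonal, h]
    have hcp : (A 0).charpoly = ∏ j, (X - C (B j j)) := by
      rw [hA0, Matrix.charpoly_of_upperTriangular _ (Matrix.blockTriangular_diagonal _)]
      simp
    have hroot : (A 0).charpoly.IsRoot (B i i) := by
      rw [hcp]
      simp only [IsRoot, eval_prod, eval_sub, eval_X, eval_C]
      exact Finset.prod_eq_zero (Finset.mem_univ i) (by ring)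
    have hmem : B i i ∈ (A 0).charpoly.roots :=
      Polynomial.mem_roots'.mpr ⟨(hmonic 0).ne_zero, hroot⟩
    have hmemD : B i i ∈ D i := by
      rw [hD]; exact Metric.mem_closedBall_self (hrnn i)
    exact Multiset.card_pos_iff_exists_mem.mpr
      ⟨B i i, Multiset.mem_filter.mpr ⟨hmem, hmemD⟩⟩
  -- S is closed
  have hSclosed : IsClosed S := by
    have hrw : S = ⋂ i, {t : I01 | 1 ≤ N i t} := by
      ext t; simp [hSdef, Set.mem_iInter]
    rw [hrw]
    refine isClosed_iInter fun i => IsSeqClosed.isClosed ?_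
    intro x a hx hlim
    have hzex : ∀ k, ∃ z, z ∈ (A (x k).1).charpoly.roots ∧ z ∈ D i := by
      intro k
      obtain ⟨z, hz⟩ := Multiset.card_pos_iff_exists_mem.mp (hx k)
      exact ⟨z, (Multiset.mem_filter.mp hz).1, (Multiset.mem_filter.mp hz).2⟩
    choose z hz1 hz2 using hzex
    have hcomp : IsCompact (D i) := by rw [hD]; exact isCompact_closedBall _ _
    obtain ⟨w, hwD, hwroot⟩ := aux_limit_root A hg (D i) hcomp x a hlim z
      (fun k => (Polynomial.mem_roots'.mp (hz1 k)).2) hz2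
    exact Multiset.card_pos_iff_exists_mem.mpr
      ⟨w, Multiset.mem_filter.mpr ⟨Polynomial.mem_roots'.mpr ⟨(hmonic a.1).ne_zero, hwroot⟩, hwD⟩⟩
  -- trivial case n = 0
  rcases Nat.eq_zero_or_pos n with hn | hn
  · subst hn
    constructor
    · exact fun i => i.elim0
    · have h0 : Multiset.card B.charpoly.roots = 0 := by
        have := hcard 1
        rwa [hA1] at this
      rw [Multiset.card_eq_zero.mp h0]
      simp
  -- S is open
  have hSopen : IsOpen S := by
    rw [isOpen_iff_mem_nhds]
    intro t ht
    have hzex : ∀ i, ∃ z, z ∈ (A t.1).charpoly.roots ∧ z ∈ D i := by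
      intro i
      obtain ⟨z, hz⟩ := Multiset.card_pos_iff_exists_mem.mp (ht i)
      exact ⟨z, (Multiset.mem_filter.mp hz).1, (Multiset.mem_filter.mp hz).2⟩
    choose z hz1 hz2 using hzex
    -- the gap
    have hne : (Finset.univ ×ˢ Finset.univ : Finset (Fin n × Fin n)).Nonempty := by
      refine ⟨(⟨0, hn⟩, ⟨0, hn⟩), by simp⟩
    set ε : ℝ := min 1 ((Finset.univ ×ˢ Finset.univ).inf' hne
      (fun p => if p.1 = p.2 then 1 else dist (z p.1) (B p.2 p.2) - r p.2)) with hεdef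
    have hgap : ∀ i j : Fin n, i ≠ j → r j < dist (z i) (B j j) := by
      intro i j hij
      by_contra hle
      push_neg at hle
      have : z i ∈ D j := by rw [hD]; exact Metric.mem_closedBall.mpr hle
      exact hij (huniq (z i) i j (hz2 i) this)
    have hε : 0 < ε := by
      rw [hεdef]
      apply lt_min one_pos
      rw [Finset.lt_inf'_iff]
      rintro ⟨i, j⟩ -
      dsimp only
      split_ifs with h
      · exact one_pos
      · have := hgap i j h
        linarith
    have hεle : ∀ i j : Fin n, i ≠ j → ε ≤ dist (z i) (B j j) - r j := by
      intro i j hij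
      calc ε ≤ (Finset.univ ×ˢ Finset.univ).inf' hne
            (fun p => if p.1 = p.2 then 1 else dist (z p.1) (B p.2 p.2) - r p.2) :=
          min_le_right _ _
        _ ≤ _ := by
          have := Finset.inf'_le (b := (i, j))
            (fun p : Fin n × Fin n => if p.1 = p.2 then 1 else dist (z p.1) (B p.2 p.2) - r p.2)
            (Finset.mem_product.mpr ⟨Finset.mem_univ i, Finset.mem_univ j⟩)
          rw [if_neg hij] at this
          exact this
    set U : Set I01 := ⋂ i, {s : I01 |
      ‖(z i • (1 : Matrix (Fin n) (Fin n) ℂ) - A s.1).det‖ < ε ^ n} with hUdef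
    have hUopen : IsOpen U := by
      refine isOpen_iInter_of_finite fun i => ?_
      refine isOpen_lt ?_ continuous_const
      exact continuous_norm.comp
        (hg.comp (continuous_id.prodMk continuous_const))
    have htU : t ∈ U := by
      refine Set.mem_iInter.mpr fun i => ?_
      have : (z i • (1 : Matrix (Fin n) (Fin n) ℂ) - A t.1).det = 0 := by
        rw [← aux_eval_charpoly]
        exact (Polynomial.mem_roots'.mp (hz1 i)).2
      rw [Set.mem_setOf_eq, this]
      simp only [norm_zero]
      positivity
    have hUS : U ⊆ S := by
      intro s hs i
      have hsi : ‖(A s.1).charpoly.eval (z i)‖ < ε ^ (A s.1).charpoly.natDegree := by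
        rw [aux_eval_charpoly, hdeg]
        exact Set.mem_iInter.mp hs i
      obtain ⟨w, hw, hwz⟩ := aux_root_near _ (hmonic s.1) (z i) ε hε hsi
      obtain ⟨j, hwj⟩ := hroot_mem s.1 s.2 w (Polynomial.mem_roots'.mp hw).2
      have hji : j = i := by
        by_contra hji
        have h1 : dist (z i) (B j j) ≤ dist (z i) w + dist w (B j j) := dist_triangle _ _ _
        have h2 : dist w (B j j) ≤ r j := by
          have := hwj; rw [hD] at this; exact Metric.mem_closedBall.mp this
        have h3 : dist (z i) w < ε := by rw [Complex.dist_eq]; exact hwz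
        have h4 := hεle i j (Ne.symm hji)
        linarith
      subst hji
      exact Multiset.card_pos_iff_exists_mem.mpr
        ⟨w, Multiset.mem_filter.mpr ⟨hw, hwj⟩⟩
    exact mem_nhds_iff.mpr ⟨U, hUS, hUopen, htU⟩
  -- conclude S = univ by connectedness
  haveI : PreconnectedSpace I01 := Subtype.preconnectedSpace isPreconnected_Icc
  have hSuniv : S = Set.univ := IsClopen.eq_univ ⟨hSclosed, hSopen⟩ ⟨⟨0, hzero⟩, hS0⟩
  have hS1 : ∀ i, 1 ≤ N i ⟨1, hone⟩ := by
    have : (⟨1, hone⟩ : I01) ∈ S := hSuniv ▸ Set.mem_univ _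
    exact this
  -- each disc contains exactly one root
  have hone1 : ∀ i, N i ⟨1, hone⟩ = 1 := by
    intro i
    by_contra hne
    have h2 : 2 ≤ N i ⟨1, hone⟩ := by
      have := hS1 i; omega
    have hlt : ∑ j : Fin n, 1 < ∑ j, N j ⟨1, hone⟩ :=
      Finset.sum_lt_sum (fun j _ => hS1 j) ⟨i, Finset.mem_univ i, by omega⟩
    rw [hsum] at hlt
    simp at hlt
  have hNB : ∀ i, Multiset.card (B.charpoly.roots.filter (fun z => z ∈ D i)) = 1 := by
    intro i
    have := hone1 i
    rw [hNdef] at this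
    simp only at this
    rwa [hA1] at this
  refine ⟨hNB, ?_⟩
  -- all roots distinct
  have hnodup : B.charpoly.roots.Nodup := by
    rw [Multiset.nodup_iff_count_le_one]
    intro w
    by_cases hw : w ∈ B.charpoly.roots
    · obtain ⟨i, hi⟩ := by
        have := hroot_mem 1 hone w ?_
        · exact this
        · rw [hA1]; exact (Polynomial.mem_roots'.mp hw).2
      calc Multiset.count w B.charpoly.roots
          = Multiset.count w (B.charpoly.roots.filter (fun z => z ∈ D i)) := by
            rw [Multiset.count_filter, if_pos hi]
        _ ≤ Multiset.card (B.charpoly.roots.filter (fun z => z ∈ D i)) :=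
            Multiset.count_le_card _ _
        _ = 1 := hNB i
    · rw [Multiset.count_eq_zero_of_notMem hw]; norm_num
  rw [Multiset.toFinset_card_eq_card_iff_nodup.mpr hnodup]
  have := hcard 1
  rwa [hA1] at this
end

section
/- Let λ ∈ ℝ and s ∈ ℂ, and let p(s) = τs³ + (1 + cλk_a)s² + cλk_v·s + cλk_p. If p(s) ≠ 0, then the 3×3 complex matrix s·I₃ − (A − cλ·B₁kᵀ) is invertible and the unique entry of the 1×1 matrix C₁·(s·I₃ − A + cλ·B₁kᵀ)⁻¹·B₂ equals 1/p(s). -/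
/-!
Closing the loop with `u = -cλ kᵀx` keeps `A - cλ B₁kᵀ` in companion form, so
`sI₃ - A + cλ B₁kᵀ` has the shape `!![s, -1, 0; 0, s, -1; a, b, d]` with determinant `p(s)/τ`.
For this shape the `(0, 2)` cofactor is `1`, hence `(M⁻¹)₀₂ = 1 / det M`, and `C₁ (·) B₂` reads
off exactly this entry, scaled by `1/τ`.
-/

open Matrix

namespace Matrix

theorem det_companion_fin_three {R : Type*} [CommRing R] (s a b d : R) :
    (!![s, -1, 0; 0, s, -1; a, b, d] : Matrix (Fin 3) (Fin 3) R).det =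
      s ^ 2 * d + b * s + a := by
  rw [det_fin_three]
  simp only [of_apply, cons_val', cons_val_zero, cons_val_fin_one, cons_val_one, cons_val]
  ring

theorem inv_companion_fin_three_apply_zero_two {K : Type*} [Field K] (s a b d : K) :
    (!![s, -1, 0; 0, s, -1; a, b, d] : Matrix (Fin 3) (Fin 3) K)⁻¹ 0 2 =
      (!![s, -1, 0; 0, s, -1; a, b, d] : Matrix (Fin 3) (Fin 3) K).det⁻¹ := by
  rw [inv_def, Ring.inverse_eq_inv', smul_apply, adjugate_fin_three]
  simp

theorem first_row_mul_mul_last_col_fin_three {R : Type*} [CommSemiring R]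
    (X : Matrix (Fin 3) (Fin 3) R) (e : R) :
    ((!![1, 0, 0] : Matrix (Fin 1) (Fin 3) R) * X * !![0; 0; e]) 0 0 = X 0 2 * e := by
  simp [mul_apply, vecMul, dotProduct, Fin.sum_univ_three]

end Matrix

/-- The transfer function of a single decoupled subsystem: if
`p(s) = τs³ + (1 + cλk_a)s² + cλk_v s + cλk_p ≠ 0`, then `sI₃ - (A - cλ B₁kᵀ)` is
invertible and the unique entry of `C₁ (sI₃ - A + cλ B₁kᵀ)⁻¹ B₂` equals `1/p(s)`. -/
theorem stmt_5 (τ kp kv ka c lam : ℝ) (hτ : 0 < τ) (s : ℂ)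
    (A : Matrix (Fin 3) (Fin 3) ℂ)
    (hA : A = !![0, 1, 0; 0, 0, 1; 0, 0, -(1 / (τ : ℂ))])
    (B1 B2 : Matrix (Fin 3) (Fin 1) ℂ)
    (hB1 : B1 = !![0; 0; 1 / (τ : ℂ)]) (hB2 : B2 = B1)
    (C1 : Matrix (Fin 1) (Fin 3) ℂ) (hC1 : C1 = !![1, 0, 0])
    (kT : Matrix (Fin 1) (Fin 3) ℂ) (hkT : kT = !![(kp : ℂ), (kv : ℂ), (ka : ℂ)])
    (p : ℂ)
    (hp : p = (τ : ℂ) * s ^ 3 + (1 + (c : ℂ) * (lam : ℂ) * (ka : ℂ)) * s ^ 2 +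
      (c : ℂ) * (lam : ℂ) * (kv : ℂ) * s + (c : ℂ) * (lam : ℂ) * (kp : ℂ))
    (hps : p ≠ 0) :
    IsUnit (s • (1 : Matrix (Fin 3) (Fin 3) ℂ) -
      (A - ((c : ℂ) * (lam : ℂ)) • (B1 * kT))).det ∧
    (C1 * (s • (1 : Matrix (Fin 3) (Fin 3) ℂ) - A +
      ((c : ℂ) * (lam : ℂ)) • (B1 * kT))⁻¹ * B2) 0 0 = 1 / p := by
  have hτ0 : (τ : ℂ) ≠ 0 := by exact_mod_cast hτ.ne'
  set cl : ℂ := (c : ℂ) * (lam : ℂ)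
  have hM : s • (1 : Matrix (Fin 3) (Fin 3) ℂ) - A + cl • (B1 * kT) =
      !![s, -1, 0; 0, s, -1; cl * kp / τ, cl * kv / τ, s + (1 + cl * ka) / τ] := by
    subst hA hB1 hkT
    ext i j
    fin_cases i <;> fin_cases j <;> simp [one_apply] <;> ring
  have hdet : (!![s, -1, 0; 0, s, -1; cl * kp / τ, cl * kv / τ, s + (1 + cl * ka) / τ] :
      Matrix (Fin 3) (Fin 3) ℂ).det = p / τ := by
    rw [det_companion_fin_three, hp]
    field_simp
  constructor
  · rw [← sub_add, hM, hdet]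
    exact (div_ne_zero hps hτ0).isUnit
  · rw [hC1, hB2, hM, hB1, first_row_mul_mul_last_col_fin_three,
      inv_companion_fin_three_apply_zero_two, hdet]
    field_simp
end

section
/- Let M be any N×N real matrix and set A_c = I_N ⊗ A − c·M ⊗ (B₁kᵀ), B = I_N ⊗ B₂, C = I_N ⊗ C₁. For s ∈ ℂ define the N×N complex matrix H(s) = (τs³ + s²)·I_N + c·(k_p + k_v·s + k_a·s²)·M. If H(s) is invertible, then s·I_{3N} − A_c is invertible and C·(s·I_{3N} − A_c)⁻¹·B = H(s)⁻¹. -/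
open Matrix
open scoped Kronecker

/-!
With `v(s) = (1, s, s²)ᵀ` one has `(sI - A) v = (τs³ + s²) B₁` and `c B₁ kᵀ v = c (k_p + k_v s +
k_a s²) B₁`, hence `(sI - A_c) (Y ⊗ v) = (H(s) Y) ⊗ B₁` for every `Y`. Taking `Y = H(s)⁻¹` gives
`(sI - A_c)⁻¹ B = H(s)⁻¹ ⊗ v`, and `C₁ v = 1`.

For invertibility, write a kernel vector of `sI - A_c` as `vec X`. The first two block rows of the
kernel equation (a chain of integrators) force `X = v X₀` for the top row `X₀` of `X`; the last one
then reads `B₁ X₀ H(s)ᵀ = 0`, so `X₀ = 0`.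
-/

theorem Matrix.map_kronecker {R S l m n p : Type*} [Mul R] [Mul S] {f : R → S}
    (hf : ∀ a b, f (a * b) = f a * f b) (A : Matrix l m R) (B : Matrix n p R) :
    (A ⊗ₖ B).map f = A.map f ⊗ₖ B.map f := by
  ext ⟨i, a⟩ ⟨j, b⟩
  exact hf _ _

theorem Matrix.kronecker_sub {R l m n p : Type*} [NonUnitalNonAssocRing R] (A : Matrix l m R)
    (B C : Matrix n p R) : A ⊗ₖ (B - C) = A ⊗ₖ B - A ⊗ₖ C := by
  ext ⟨i, a⟩ ⟨j, b⟩
  simp [mul_sub]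

theorem Matrix.add_kronecker_mul_kronecker {R l l' m n : Type*} [CommSemiring R] [Fintype l]
    [Fintype m] (P M : Matrix l l R) (G F : Matrix m m R) (Y : Matrix l l' R)
    {v b : Matrix m n R} {d q : R} (hG : G * v = d • b) (hF : F * v = q • b) :
    (P ⊗ₖ G + M ⊗ₖ F) * (Y ⊗ₖ v) = ((d • P + q • M) * Y) ⊗ₖ b := by
  rw [Matrix.add_mul, ← mul_kronecker_mul, ← mul_kronecker_mul, hG, hF, kronecker_smul,
    kronecker_smul, ← smul_kronecker, ← smul_kronecker, ← add_kronecker, Matrix.add_mul,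
    Matrix.smul_mul, Matrix.smul_mul]

theorem Matrix.one_kronecker_mul_inv_mul_one_kronecker {R l m n n' : Type*} [CommRing R]
    [Fintype l] [DecidableEq l] [Fintype m] [DecidableEq m]
    {L : Matrix (l × m) (l × m) R} (hL : IsUnit L.det) {Y : Matrix l l R} {v b : Matrix m n R}
    (hLY : L * (Y ⊗ₖ v) = (1 : Matrix l l R) ⊗ₖ b) (C : Matrix n' m R) :
    ((1 : Matrix l l R) ⊗ₖ C) * L⁻¹ * ((1 : Matrix l l R) ⊗ₖ b) = Y ⊗ₖ (C * v) := by
  rw [← hLY, Matrix.mul_assoc, ← Matrix.mul_assoc L⁻¹, nonsing_inv_mul _ hL, Matrix.one_mul,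
    ← mul_kronecker_mul, Matrix.one_mul]

namespace Platoon

variable {K : Type*} [Field K]

def vehicleDynamics (τ : K) : Matrix (Fin 3) (Fin 3) K := !![0, 1, 0; 0, 0, 1; 0, 0, -(1 / τ)]

def vehicleInput (τ : K) : Matrix (Fin 3) (Fin 1) K := !![0; 0; 1 / τ]

def powerColumn (s : K) : Matrix (Fin 3) (Fin 1) K := !![1; s; s ^ 2]

theorem smul_one_sub_vehicleDynamics_mul_powerColumn {τ : K} (hτ : τ ≠ 0) (s : K) :
    (s • 1 - vehicleDynamics τ) * powerColumn s = (τ * s ^ 3 + s ^ 2) • vehicleInput τ := by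
  rw [Matrix.sub_mul, Matrix.smul_mul, Matrix.one_mul]
  ext i j
  fin_cases i <;> fin_cases j <;> simp [vehicleDynamics, vehicleInput, powerColumn]
  · ring
  · field_simp

theorem smul_vehicleInput_mul_mul_powerColumn (τ kp kv ka c s : K) :
    c • (vehicleInput τ * !![kp, kv, ka]) * powerColumn s =
      (c * (kp + kv * s + ka * s ^ 2)) • vehicleInput τ := by
  ext i j
  fin_cases i <;> fin_cases j <;> simp [vehicleInput, powerColumn, mul_apply, Fin.sum_univ_three]
  ring

theorem row_one_zero_zero_mul_powerColumn (s : K) : !![(1 : K), 0, 0] * powerColumn s = 1 := by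
  ext i j
  fin_cases i; fin_cases j
  simp [powerColumn, mul_apply, Fin.sum_univ_three]

variable {n : Type*}

theorem eq_zero_of_vehicleInput_mul_eq_zero {τ : K} (hτ : τ ≠ 0) {Y : Matrix (Fin 1) n K}
    (hY : vehicleInput τ * Y = 0) : Y = 0 := by
  ext i j
  fin_cases i
  simpa [vehicleInput, mul_apply, hτ] using congrFun (congrFun hY 2) j

theorem eq_powerColumn_mul_of_smul_one_sub_vehicleDynamics_mul_add_eq_zero (τ s : K)
    {X : Matrix (Fin 3) n K} {Z : Matrix (Fin 1) n K}
    (hX : (s • 1 - vehicleDynamics τ) * X + vehicleInput τ * Z = 0) :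
    X = powerColumn s * replicateRow (Fin 1) (X 0) := by
  have hrow (a : Fin 3) (j : n) :
      s * X a j - (vehicleDynamics τ * X) a j + (vehicleInput τ * Z) a j = 0 := by
    simpa [Matrix.sub_mul] using congrFun (congrFun hX a) j
  have h1 (j : n) : X 1 j = s * X 0 j := by
    have := hrow 0 j
    simp [vehicleDynamics, vehicleInput, mul_apply, Fin.sum_univ_three] at this
    linear_combination -this
  have h2 (j : n) : X 2 j = s ^ 2 * X 0 j := by
    have := hrow 1 j
    simp [vehicleDynamics, vehicleInput, mul_apply, Fin.sum_univ_three] at this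
    linear_combination -this + s * h1 j
  ext a j
  fin_cases a <;> simp [powerColumn, mul_apply, h1, h2]

variable [DecidableEq n]

def charMatrix (τ kp kv ka c s : K) (M : Matrix n n K) : Matrix n n K :=
  (τ * s ^ 3 + s ^ 2) • 1 + (c * (kp + kv * s + ka * s ^ 2)) • M

theorem charMatrix_transpose (τ kp kv ka c s : K) (M : Matrix n n K) :
    (charMatrix τ kp kv ka c s M)ᵀ = charMatrix τ kp kv ka c s Mᵀ := by
  simp [charMatrix]

def closedLoopMatrix (τ kp kv ka c : K) (M : Matrix n n K) :
    Matrix (n × Fin 3) (n × Fin 3) K :=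
  1 ⊗ₖ vehicleDynamics τ - c • (M ⊗ₖ (vehicleInput τ * !![kp, kv, ka]))

theorem smul_one_sub_closedLoopMatrix (τ kp kv ka c s : K) (M : Matrix n n K) :
    s • 1 - closedLoopMatrix τ kp kv ka c M =
      1 ⊗ₖ (s • 1 - vehicleDynamics τ) + M ⊗ₖ (c • (vehicleInput τ * !![kp, kv, ka])) := by
  rw [closedLoopMatrix, kronecker_sub, kronecker_smul, ← one_kronecker_one, kronecker_smul]
  abel

section Map

variable {L : Type*} [Field L] (f : K →+* L)

theorem map_vehicleDynamics (τ : K) : (vehicleDynamics τ).map f = vehicleDynamics (f τ) := by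
  ext i j
  fin_cases i <;> fin_cases j <;> simp [vehicleDynamics]

theorem map_vehicleInput (τ : K) : (vehicleInput τ).map f = vehicleInput (f τ) := by
  ext i j
  fin_cases i <;> fin_cases j <;> simp [vehicleInput]

theorem map_closedLoopMatrix (τ kp kv ka c : K) (M : Matrix n n K) :
    (closedLoopMatrix τ kp kv ka c M).map f =
      closedLoopMatrix (f τ) (f kp) (f kv) (f ka) (f c) (M.map f) := by
  have hk : (!![kp, kv, ka]).map f = !![f kp, f kv, f ka] := by
    ext i j
    fin_cases i; fin_cases j <;> rfl
  rw [closedLoopMatrix, closedLoopMatrix, Matrix.map_sub _ (map_sub f),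
    Matrix.map_smul' _ _ _ (map_mul f), map_kronecker (map_mul f), map_kronecker (map_mul f),
    Matrix.map_one _ (map_zero f) (map_one f), Matrix.map_mul, map_vehicleDynamics,
    map_vehicleInput, hk]

end Map

variable [Fintype n] {τ kp kv ka c s : K} {M : Matrix n n K}

theorem eq_zero_of_smul_one_sub_vehicleDynamics_mul_add_eq_zero (hτ : τ ≠ 0)
    (hH : IsUnit (charMatrix τ kp kv ka c s M).det) {X : Matrix (Fin 3) n K}
    (hX : (s • 1 - vehicleDynamics τ) * X + c • (vehicleInput τ * !![kp, kv, ka]) * X * M = 0) :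
    X = 0 := by
  set X₀ := replicateRow (Fin 1) (X 0)
  have hXv : X = powerColumn s * X₀ := by
    refine eq_powerColumn_mul_of_smul_one_sub_vehicleDynamics_mul_add_eq_zero τ s
      (Z := c • (!![kp, kv, ka] * X * M)) ?_
    rw [← hX]
    simp only [Matrix.smul_mul, Matrix.mul_smul, Matrix.mul_assoc]
  have hX₀H : X₀ * charMatrix τ kp kv ka c s M = 0 := by
    refine eq_zero_of_vehicleInput_mul_eq_zero hτ ?_
    rw [← hX, hXv, ← Matrix.mul_assoc (s • 1 - _), ← Matrix.mul_assoc (c • _),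
      smul_one_sub_vehicleDynamics_mul_powerColumn hτ, smul_vehicleInput_mul_mul_powerColumn,
      charMatrix]
    simp only [Matrix.mul_add, Matrix.mul_smul, Matrix.smul_mul, Matrix.mul_one, Matrix.mul_assoc]
  have hX₀ : X₀ = 0 := by
    rw [← Matrix.mul_one X₀, ← mul_nonsing_inv _ hH, ← Matrix.mul_assoc, hX₀H, Matrix.zero_mul]
  rw [hXv, hX₀, Matrix.mul_zero]

theorem isUnit_det_smul_one_sub_closedLoopMatrix (hτ : τ ≠ 0)
    (hH : IsUnit (charMatrix τ kp kv ka c s M).det) :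
    IsUnit (s • 1 - closedLoopMatrix τ kp kv ka c M).det := by
  rw [isUnit_iff_ne_zero, Ne, ← exists_mulVec_eq_zero_iff]
  rintro ⟨x, hx0, hx⟩
  obtain ⟨X, rfl⟩ := vec_bijective.2 x
  rw [smul_one_sub_closedLoopMatrix, add_mulVec, kronecker_mulVec_vec, kronecker_mulVec_vec,
    ← vec_add, vec_eq_zero_iff, transpose_one, Matrix.mul_one] at hx
  refine hx0 (vec_eq_zero_iff.2 (eq_zero_of_smul_one_sub_vehicleDynamics_mul_add_eq_zero hτ ?_ hx))
  rwa [← charMatrix_transpose, det_transpose]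

theorem smul_one_sub_closedLoopMatrix_mul_inv_kronecker_powerColumn (hτ : τ ≠ 0)
    (hH : IsUnit (charMatrix τ kp kv ka c s M).det) :
    (s • 1 - closedLoopMatrix τ kp kv ka c M) *
        ((charMatrix τ kp kv ka c s M)⁻¹ ⊗ₖ powerColumn s) = 1 ⊗ₖ vehicleInput τ := by
  rw [smul_one_sub_closedLoopMatrix, add_kronecker_mul_kronecker _ _ _ _ _
    (smul_one_sub_vehicleDynamics_mul_powerColumn hτ s)
    (smul_vehicleInput_mul_mul_powerColumn τ kp kv ka c s), ← charMatrix, mul_nonsing_inv _ hH]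

end Platoon

open Platoon

/-- The closed-loop platoon transfer function: if
`H(s) = (τs³+s²) I_N + c (k_p + k_v s + k_a s²) M` is invertible, then
`s I_{3N} - A_c` is invertible and `C (s I_{3N} - A_c)⁻¹ B = H(s)⁻¹`
(entrywise, identifying `Fin N × Fin 1` with `Fin N`). -/
theorem stmt_6 (τ kp kv ka c : ℝ) (hτ : 0 < τ) (N : ℕ)
    (A : Matrix (Fin 3) (Fin 3) ℝ) (hA : A = !![0, 1, 0; 0, 0, 1; 0, 0, -(1 / τ)])
    (B1 B2 : Matrix (Fin 3) (Fin 1) ℝ) (hB1 : B1 = !![0; 0; 1 / τ]) (hB2 : B2 = B1)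
    (C1 : Matrix (Fin 1) (Fin 3) ℝ) (hC1 : C1 = !![1, 0, 0])
    (kT : Matrix (Fin 1) (Fin 3) ℝ) (hkT : kT = !![kp, kv, ka])
    (M : Matrix (Fin N) (Fin N) ℝ)
    (Ac : Matrix (Fin N × Fin 3) (Fin N × Fin 3) ℝ)
    (hAc : Ac = (1 : Matrix (Fin N) (Fin N) ℝ) ⊗ₖ A - c • (M ⊗ₖ (B1 * kT)))
    (Bb : Matrix (Fin N × Fin 3) (Fin N × Fin 1) ℝ)
    (hBb : Bb = (1 : Matrix (Fin N) (Fin N) ℝ) ⊗ₖ B2)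
    (Cc : Matrix (Fin N × Fin 1) (Fin N × Fin 3) ℝ)
    (hCc : Cc = (1 : Matrix (Fin N) (Fin N) ℝ) ⊗ₖ C1)
    (s : ℂ)
    (H : Matrix (Fin N) (Fin N) ℂ)
    (hH : H = ((τ : ℂ) * s ^ 3 + s ^ 2) • (1 : Matrix (Fin N) (Fin N) ℂ) +
      ((c : ℂ) * ((kp : ℂ) + (kv : ℂ) * s + (ka : ℂ) * s ^ 2)) •
        M.map (Complex.ofReal : ℝ → ℂ))
    (hHs : IsUnit H.det) :
    IsUnit (s • (1 : Matrix (Fin N × Fin 3) (Fin N × Fin 3) ℂ) -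
      Ac.map (Complex.ofReal : ℝ → ℂ)).det ∧
    ∀ i j : Fin N,
      (Cc.map (Complex.ofReal : ℝ → ℂ) *
        (s • (1 : Matrix (Fin N × Fin 3) (Fin N × Fin 3) ℂ) -
          Ac.map (Complex.ofReal : ℝ → ℂ))⁻¹ *
        Bb.map (Complex.ofReal : ℝ → ℂ)) (i, 0) (j, 0) = H⁻¹ i j := by
  have hτ' : (τ : ℂ) ≠ 0 := Complex.ofReal_ne_zero.2 hτ.ne'
  have hAc' : Ac.map Complex.ofReal =
      closedLoopMatrix (τ : ℂ) kp kv ka c (M.map Complex.ofReal) := by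
    subst hA hB1 hkT hAc
    exact map_closedLoopMatrix Complex.ofRealHom τ kp kv ka c M
  have hBb' : Bb.map Complex.ofReal = 1 ⊗ₖ vehicleInput (τ : ℂ) := by
    rw [hBb, hB2, hB1, map_kronecker Complex.ofReal_mul,
      Matrix.map_one _ Complex.ofReal_zero Complex.ofReal_one]
    exact congrArg _ (map_vehicleInput Complex.ofRealHom τ)
  have hCc' : Cc.map Complex.ofReal = 1 ⊗ₖ !![(1 : ℂ), 0, 0] := by
    rw [hCc, hC1, map_kronecker Complex.ofReal_mul,
      Matrix.map_one _ Complex.ofReal_zero Complex.ofReal_one]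
    congr 1
    ext i j
    fin_cases i; fin_cases j <;> simp
  replace hH : H = charMatrix (τ : ℂ) kp kv ka c s (M.map Complex.ofReal) := hH
  subst hH
  have hL := isUnit_det_smul_one_sub_closedLoopMatrix hτ' hHs
  rw [hAc', hBb', hCc']
  refine ⟨hL, fun i j => ?_⟩
  rw [one_kronecker_mul_inv_mul_one_kronecker hL
    (smul_one_sub_closedLoopMatrix_mul_inv_kronecker_powerColumn hτ' hHs),
    row_one_zero_zero_mul_powerColumn]
  simp
end

section
/- Suppose c = 1 and M = V·Λ·V⁻¹ with V an invertible N×N real matrix and Λ = diag(λ₁,…,λ_N) real diagonal. Let p_i(s) = τs³ + (1 + λ_i k_a)s² + λ_i k_v·s + λ_i k_p and H(s) = (τs³ + s²)·I_N + (k_p + k_v·s + k_a·s²)·M. If ω ∈ ℝ is such that p_i(iω) ≠ 0 for every i, then H(iω) is invertible and ‖H(iω)⁻¹‖ ≤ √(μ_max/μ_min) · max_i (1/|p_i(iω)|), where μ_max and μ_min are the largest and smallest eigenvalues of VᵀV. -/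
open Matrix Polynomial
open scoped Matrix.Norms.L2Operator

noncomputable instance matCStar (N : ℕ) : CStarAlgebra (Matrix (Fin N) (Fin N) ℂ) :=
  { Matrix.instL2OpNormedRing, Matrix.instL2OpNormedAlgebra, Matrix.instCStarRing,
    (inferInstance : StarRing (Matrix (Fin N) (Fin N) ℂ)),
    (inferInstance : StarModule ℂ (Matrix (Fin N) (Fin N) ℂ)) with
    complete := FiniteDimensional.complete ℂ (Matrix (Fin N) (Fin N) ℂ) |>.complete }

lemma aux_eval_charpoly_s10 {K : Type*} [Field K] {N : ℕ} (B : Matrix (Fin N) (Fin N) K) (t : K) :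
    B.charpoly.eval t = (t • (1 : Matrix (Fin N) (Fin N) K) - B).det := by
  rw [Matrix.charpoly, ← Polynomial.coe_evalRingHom, RingHom.map_det]
  congr 1
  ext i j
  by_cases h : i = j <;>
    simp [Matrix.charmatrix_apply, Matrix.map_apply, h, Matrix.one_apply, Matrix.diagonal_apply]

lemma aux_mem_spectrum_iff {K : Type*} [Field K] {N : ℕ} (A : Matrix (Fin N) (Fin N) K) (z : K) :
    z ∈ spectrum K A ↔ A.charpoly.eval z = 0 := by
  rw [spectrum.mem_iff, Matrix.isUnit_iff_isUnit_det, aux_eval_charpoly_s10,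
    Algebra.algebraMap_eq_smul_one, isUnit_iff_ne_zero, not_ne_iff]

lemma aux_diag_norm_le {N : ℕ} (d : Fin N → ℂ) (b : ℝ) (hb : 0 ≤ b) (hd : ∀ i, ‖d i‖ ≤ b) :
    ‖(Matrix.diagonal d : Matrix (Fin N) (Fin N) ℂ)‖ ≤ b := by
  rw [Matrix.l2_opNorm_def]
  refine ContinuousLinearMap.opNorm_le_bound _ hb fun x => ?_
  have hx : ∀ (y : EuclideanSpace ℂ (Fin N)), ‖y‖ = Real.sqrt (∑ i, ‖y i‖ ^ 2) :=
    fun y => by rw [EuclideanSpace.norm_eq]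
  rw [hx, hx]
  have happ : ∀ i, ((Matrix.toEuclideanLin.trans LinearMap.toContinuousLinearMap)
      (Matrix.diagonal d) x) i = d i * x i := by
    intro i
    show (Matrix.toEuclideanLin (Matrix.diagonal d) x) i = _
    rw [Matrix.toEuclideanLin_apply]
    exact Matrix.mulVec_diagonal d _ i
  have hsum : ∑ i, ‖((Matrix.toEuclideanLin.trans LinearMap.toContinuousLinearMap)
      (Matrix.diagonal d) x) i‖ ^ 2 ≤ b ^ 2 * ∑ i, ‖x i‖ ^ 2 := by
    rw [Finset.mul_sum]
    refine Finset.sum_le_sum fun i _ => ?_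
    rw [happ i, norm_mul]
    have h2 : (‖d i‖ * ‖x i‖) ^ 2 ≤ (b * ‖x i‖) ^ 2 :=
      pow_le_pow_left₀ (by positivity) (mul_le_mul_of_nonneg_right (hd i) (norm_nonneg _)) 2
    calc (‖d i‖ * ‖x i‖) ^ 2 ≤ (b * ‖x i‖) ^ 2 := h2
      _ = b ^ 2 * ‖x i‖ ^ 2 := by ring
  calc Real.sqrt (∑ i, ‖((Matrix.toEuclideanLin.trans LinearMap.toContinuousLinearMap)
        (Matrix.diagonal d) x) i‖ ^ 2) ≤ Real.sqrt (b ^ 2 * ∑ i, ‖x i‖ ^ 2) :=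
        Real.sqrt_le_sqrt hsum
    _ = b * Real.sqrt (∑ i, ‖x i‖ ^ 2) := by
        rw [Real.sqrt_mul (by positivity), Real.sqrt_sq hb]

lemma aux_herm_norm_le {N : ℕ} (A : Matrix (Fin N) (Fin N) ℂ) (hA : IsSelfAdjoint A)
    (b : ℝ) (hb : 0 ≤ b) (h : ∀ z ∈ spectrum ℂ A, ‖z‖ ≤ b) : ‖A‖ ≤ b := by
  have h1 : (‖A‖₊ : ENNReal) ≤ ENNReal.ofReal b := by
    rw [← hA.spectralRadius_eq_nnnorm, spectralRadius]
    refine iSup₂_le fun z hz => ?_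
    rw [← ENNReal.ofReal_coe_nnreal, coe_nnnorm]
    exact ENNReal.ofReal_le_ofReal (h z hz)
  rw [ENNReal.ofReal, ENNReal.coe_le_coe, ← NNReal.coe_le_coe, coe_nnnorm] at h1
  exact h1.trans (Real.coe_toNNReal b hb).le

lemma aux_inv_spectrum {N : ℕ} (A : Matrix (Fin N) (Fin N) ℂ) (hA : IsUnit A.det)
    (z : ℂ) (hz : z ∈ spectrum ℂ A⁻¹) : z ≠ 0 ∧ z⁻¹ ∈ spectrum ℂ A := by
  have hAinv : IsUnit (A⁻¹) := by
    rw [Matrix.isUnit_iff_isUnit_det, Matrix.det_nonsing_inv]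
    exact isUnit_ringInverse.mpr hA
  have hz0 : z ≠ 0 := by
    intro h0
    rw [h0] at hz
    exact (spectrum.zero_notMem_iff ℂ |>.mpr hAinv) hz
  refine ⟨hz0, ?_⟩
  rw [aux_mem_spectrum_iff, aux_eval_charpoly_s10] at hz ⊢
  have key : z • (1 : Matrix (Fin N) (Fin N) ℂ) - A⁻¹ = A⁻¹ * (z • A - 1) := by
    rw [Matrix.mul_sub, Matrix.mul_smul, Matrix.nonsing_inv_mul A hA, mul_one]
  rw [key, Matrix.det_mul] at hz
  have hdetinv : A⁻¹.det ≠ 0 := by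
    rw [Matrix.det_nonsing_inv]
    exact (isUnit_ringInverse.mpr hA).ne_zero
  have h2 : (z • A - 1 : Matrix (Fin N) (Fin N) ℂ).det = 0 := by
    rcases mul_eq_zero.mp hz with h | h
    · exact absurd h hdetinv
    · exact h
  have key2 : z • A - (1 : Matrix (Fin N) (Fin N) ℂ) =
      z • (A - z⁻¹ • (1 : Matrix (Fin N) (Fin N) ℂ)) := by
    rw [smul_sub, smul_smul, mul_inv_cancel₀ hz0, one_smul]
  rw [key2, Matrix.det_smul, mul_eq_zero] at h2
  rcases h2 with h | h
  · exact absurd h (pow_ne_zero _ hz0)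
  · have : z⁻¹ • (1 : Matrix (Fin N) (Fin N) ℂ) - A = -(A - z⁻¹ • 1) := by rw [neg_sub]
    rw [this, Matrix.det_neg, h, mul_zero]

lemma aux_spec_real {N : ℕ} (B : Matrix (Fin N) (Fin N) ℝ) (z : ℂ)
    (hz : z ∈ spectrum ℂ (B.map (Complex.ofReal : ℝ → ℂ))) (hre : z = z.re) :
    B.charpoly.IsRoot z.re := by
  rw [aux_mem_spectrum_iff] at hz
  have hmap : (B.map (Complex.ofReal : ℝ → ℂ)).charpoly = B.charpoly.map Complex.ofRealHom :=
    Matrix.charpoly_map B Complex.ofRealHom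
  rw [hmap, hre, Polynomial.eval_map] at hz
  have h1 : (Complex.ofRealHom (B.charpoly.eval z.re) : ℂ) = 0 := by
    rw [← Polynomial.eval₂_at_apply]; exact hz
  have h2 : ((B.charpoly.eval z.re : ℝ) : ℂ) = 0 := h1
  exact_mod_cast h2

lemma aux_mumin_pos {N : ℕ} (V : Matrix (Fin N) (Fin N) ℝ) (hV : IsUnit V.det)
    (μ : ℝ) (hroot : (Vᵀ * V).charpoly.IsRoot μ) : 0 < μ := by
  have hdet : (μ • (1 : Matrix (Fin N) (Fin N) ℝ) - Vᵀ * V).det = 0 := by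
    rw [← aux_eval_charpoly_s10]; exact hroot
  obtain ⟨v, hv0, hveq⟩ := (Matrix.exists_mulVec_eq_zero_iff).mpr hdet
  have hVv : (Vᵀ * V) *ᵥ v = μ • v := by
    have h := hveq
    rw [Matrix.sub_mulVec, sub_eq_zero, Matrix.smul_mulVec, Matrix.one_mulVec] at h
    exact h.symm
  have hw0 : V *ᵥ v ≠ 0 := by
    intro h
    apply hv0
    have h2 : V⁻¹ *ᵥ (V *ᵥ v) = v := by
      rw [Matrix.mulVec_mulVec, Matrix.nonsing_inv_mul V hV, Matrix.one_mulVec]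
    rw [h, Matrix.mulVec_zero] at h2
    exact h2.symm
  have key : μ * (v ⬝ᵥ v) = (V *ᵥ v) ⬝ᵥ (V *ᵥ v) := by
    have h1 : v ⬝ᵥ ((Vᵀ * V) *ᵥ v) = (V *ᵥ v) ⬝ᵥ (V *ᵥ v) := by
      rw [← Matrix.mulVec_mulVec, Matrix.dotProduct_mulVec, Matrix.vecMul_transpose]
    rw [hVv] at h1
    rw [← h1, dotProduct_smul]
    rfl
  have hvv : 0 < v ⬝ᵥ v := by
    rcases (Finset.sum_nonneg fun i _ => mul_self_nonneg (v i)).lt_or_eq with h | h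
    · exact h
    · exact absurd ((dotProduct_self_eq_zero).mp h.symm) hv0
  have hww : 0 < (V *ᵥ v) ⬝ᵥ (V *ᵥ v) := by
    rcases (Finset.sum_nonneg fun i _ => mul_self_nonneg ((V *ᵥ v) i)).lt_or_eq with h | h
    · exact h
    · exact absurd ((dotProduct_self_eq_zero).mp h.symm) hw0
  nlinarith

lemma aux_map_mul {N : ℕ} (A B : Matrix (Fin N) (Fin N) ℝ) :
    (A * B).map (Complex.ofReal : ℝ → ℂ) =
      A.map (Complex.ofReal : ℝ → ℂ) * B.map (Complex.ofReal : ℝ → ℂ) := by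
  ext i j
  simp [Matrix.mul_apply, Matrix.map_apply]

lemma aux_map_one {N : ℕ} :
    (1 : Matrix (Fin N) (Fin N) ℝ).map (Complex.ofReal : ℝ → ℂ) = 1 := by
  ext i j
  by_cases h : i = j <;> simp [Matrix.map_apply, Matrix.one_apply, h]

/-- With `c = 1` and `M = V Λ V⁻¹`, if `pᵢ(iω) ≠ 0` for every `i`, then `H(iω)` is
invertible and `‖H(iω)⁻¹‖ ≤ √(μ_max/μ_min) · max_i (1/|pᵢ(iω)|)`. -/
theorem stmt_10 (τ kp kv ka : ℝ) (hτ : 0 < τ) (N : ℕ) (hN : 0 < N)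
    (V : Matrix (Fin N) (Fin N) ℝ) (hV : IsUnit V.det)
    (lam : Fin N → ℝ) (M : Matrix (Fin N) (Fin N) ℝ)
    (hM : M = V * Matrix.diagonal lam * V⁻¹)
    (p : Fin N → ℂ → ℂ)
    (hp : ∀ i s, p i s = (τ : ℂ) * s ^ 3 + (1 + (lam i : ℂ) * (ka : ℂ)) * s ^ 2 +
      (lam i : ℂ) * (kv : ℂ) * s + (lam i : ℂ) * (kp : ℂ))
    (H : ℂ → Matrix (Fin N) (Fin N) ℂ)
    (hH : ∀ s, H s = ((τ : ℂ) * s ^ 3 + s ^ 2) • (1 : Matrix (Fin N) (Fin N) ℂ) +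
      ((kp : ℂ) + (kv : ℂ) * s + (ka : ℂ) * s ^ 2) • M.map (Complex.ofReal : ℝ → ℂ))
    (μmax μmin : ℝ)
    (hmax : (Vᵀ * V).charpoly.IsRoot μmax ∧
      ∀ μ : ℝ, (Vᵀ * V).charpoly.IsRoot μ → μ ≤ μmax)
    (hmin : (Vᵀ * V).charpoly.IsRoot μmin ∧
      ∀ μ : ℝ, (Vᵀ * V).charpoly.IsRoot μ → μmin ≤ μ)
    (ω : ℝ) (hps : ∀ i, p i (Complex.I * (ω : ℂ)) ≠ 0) :
    IsUnit (H (Complex.I * (ω : ℂ))).det ∧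
    ‖Matrix.toEuclideanCLM (𝕜 := ℂ) ((H (Complex.I * (ω : ℂ)))⁻¹)‖ ≤
      Real.sqrt (μmax / μmin) * ⨆ i, 1 / ‖p i (Complex.I * (ω : ℂ))‖ := by
  set s : ℂ := Complex.I * (ω : ℂ) with hs
  set Vc : Matrix (Fin N) (Fin N) ℂ := V.map (Complex.ofReal : ℝ → ℂ) with hVc
  set W : Matrix (Fin N) (Fin N) ℂ := V⁻¹.map (Complex.ofReal : ℝ → ℂ) with hW
  set d : Fin N → ℂ := fun i => p i s with hd
  set a : ℂ := (τ : ℂ) * s ^ 3 + s ^ 2 with ha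
  set q : ℂ := (kp : ℂ) + (kv : ℂ) * s + (ka : ℂ) * s ^ 2 with hq
  have hVcW : Vc * W = 1 := by
    rw [hVc, hW, ← aux_map_mul, Matrix.mul_nonsing_inv V hV, aux_map_one]
  have hWVc : W * Vc = 1 := by
    rw [hVc, hW, ← aux_map_mul, Matrix.nonsing_inv_mul V hV, aux_map_one]
  have hMc : M.map (Complex.ofReal : ℝ → ℂ) =
      Vc * Matrix.diagonal (fun i => (lam i : ℂ)) * W := by
    rw [hM, aux_map_mul, aux_map_mul]
    congr 1
    congr 1
    ext i j
    by_cases h : i = j <;> simp [Matrix.map_apply, Matrix.diagonal_apply, h]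
  have hDsplit : Matrix.diagonal d = a • (1 : Matrix (Fin N) (Fin N) ℂ) +
      q • Matrix.diagonal (fun i => (lam i : ℂ)) := by
    ext i j
    by_cases h : i = j
    · subst h
      simp only [Matrix.diagonal_apply_eq, Matrix.add_apply, Matrix.smul_apply,
        Matrix.one_apply_eq, smul_eq_mul]
      show p i s = a * 1 + q * (lam i : ℂ)
      rw [hp i s, ha, hq]
      ring
    · simp [Matrix.diagonal_apply_ne _ h, Matrix.one_apply_ne h, h]
  have hHeq : H s = Vc * Matrix.diagonal d * W := by
    rw [hH s, ← ha, ← hq, hMc, hDsplit]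
    simp only [Matrix.mul_add, Matrix.add_mul, Matrix.mul_smul, Matrix.smul_mul,
      Matrix.mul_one]
    rw [hVcW]
  have hdne : ∀ i, d i ≠ 0 := fun i => hps i
  -- invertibility
  have hVcdet : IsUnit Vc.det := Matrix.isUnit_det_of_right_inverse hVcW
  have hWdet : IsUnit W.det := Matrix.isUnit_det_of_right_inverse hWVc
  have hDdet : IsUnit (Matrix.diagonal d).det := by
    rw [Matrix.det_diagonal, isUnit_iff_ne_zero]
    exact Finset.prod_ne_zero_iff.mpr fun i _ => hdne i
  have hHdet : IsUnit (H s).det := by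
    rw [hHeq, Matrix.det_mul, Matrix.det_mul]
    exact (hVcdet.mul hDdet).mul hWdet
  refine ⟨hHdet, ?_⟩
  -- inverse formula
  set D' : Matrix (Fin N) (Fin N) ℂ := Matrix.diagonal (fun i => (d i)⁻¹) with hD'
  have hright : H s * (Vc * D' * W) = 1 := by
    rw [hHeq]
    calc (Vc * Matrix.diagonal d * W) * (Vc * D' * W)
        = Vc * (Matrix.diagonal d * ((W * Vc) * (D' * W))) := by
          simp only [Matrix.mul_assoc]
      _ = Vc * (Matrix.diagonal d * D' * W) := by
          rw [hWVc, Matrix.one_mul, Matrix.mul_assoc]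
      _ = Vc * W := by
          rw [hD', Matrix.diagonal_mul_diagonal]
          have : (fun i => d i * (d i)⁻¹) = fun _ => (1 : ℂ) := by
            funext i; exact mul_inv_cancel₀ (hdne i)
          rw [this, Matrix.diagonal_one, Matrix.one_mul]
      _ = 1 := hVcW
  have hHinv : (H s)⁻¹ = Vc * D' * W := Matrix.inv_eq_right_inv hright
  -- positivity of eigenvalue bounds
  have hμmin_pos : 0 < μmin := aux_mumin_pos V hV μmin hmin.1
  have hμmax_pos : 0 < μmax := aux_mumin_pos V hV μmax hmax.1
  -- the Gram matrix
  set A : Matrix (Fin N) (Fin N) ℂ := Vcᴴ * Vc with hA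
  have hVcH : Vcᴴ = Vᵀ.map (Complex.ofReal : ℝ → ℂ) := by
    ext i j
    simp [hVc, Matrix.conjTranspose_apply, Matrix.map_apply, Matrix.transpose_apply,
      Complex.conj_ofReal]
  have hAmap : A = (Vᵀ * V).map (Complex.ofReal : ℝ → ℂ) := by
    rw [hA, hVcH, hVc, ← aux_map_mul]
  have hA_saH : Aᴴ = A := by
    rw [hA, Matrix.conjTranspose_mul, Matrix.conjTranspose_conjTranspose]
  have hA_sa : _root_.IsSelfAdjoint A := by
    show star A = A
    rw [Matrix.star_eq_conjTranspose]
    exact hA_saH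
  -- spectrum of A
  have hAspec : ∀ z ∈ spectrum ℂ A, ‖z‖ ≤ μmax := by
    intro z hz
    have hre : z = z.re := hA_sa.mem_spectrum_eq_re hz
    rw [hAmap] at hz
    have hroot := aux_spec_real _ _ hz hre
    have h1 : z.re ≤ μmax := hmax.2 _ hroot
    have h2 : 0 < z.re := aux_mumin_pos V hV _ hroot
    rw [hre, Complex.norm_real, Real.norm_eq_abs, abs_of_pos h2]
    exact h1
  have hAnorm : ‖A‖ ≤ μmax := aux_herm_norm_le A hA_sa μmax hμmax_pos.le hAspec
  have hVcnorm : ‖Vc‖ ≤ Real.sqrt μmax := by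
    have h1 : ‖Vcᴴ * Vc‖ = ‖Vc‖ * ‖Vc‖ := Matrix.l2_opNorm_conjTranspose_mul_self Vc
    have h2 : ‖Vc‖ * ‖Vc‖ ≤ μmax := by rw [← h1]; exact hAnorm
    have h3 : ‖Vc‖ = Real.sqrt (‖Vc‖ ^ 2) := (Real.sqrt_sq (norm_nonneg _)).symm
    rw [h3]
    apply Real.sqrt_le_sqrt
    nlinarith [norm_nonneg Vc]
  -- A⁻¹
  have hAdet : IsUnit A.det := by
    rw [hA, Matrix.det_mul]
    exact (by rwa [Matrix.det_conjTranspose, isUnit_star] : IsUnit Vcᴴ.det).mul hVcdet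
  have hAinv_sa : _root_.IsSelfAdjoint A⁻¹ := by
    show star A⁻¹ = A⁻¹
    rw [Matrix.star_eq_conjTranspose, Matrix.conjTranspose_nonsing_inv, hA_saH]
  have hAinvspec : ∀ z ∈ spectrum ℂ A⁻¹, ‖z‖ ≤ μmin⁻¹ := by
    intro z hz
    obtain ⟨hz0, hzinv⟩ := aux_inv_spectrum A hAdet z hz
    have hre : z = z.re := hAinv_sa.mem_spectrum_eq_re hz
    have hre0 : z.re ≠ 0 := by
      intro h; apply hz0; rw [hre, h, Complex.ofReal_zero]
    have hzin : ((z.re⁻¹ : ℝ) : ℂ) ∈ spectrum ℂ A := by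
      rw [Complex.ofReal_inv, ← hre]; exact hzinv
    rw [hAmap] at hzin
    have hroot := aux_spec_real _ _ hzin (by simp)
    simp only [Complex.ofReal_re] at hroot
    have h1 : μmin ≤ z.re⁻¹ := hmin.2 _ hroot
    have h2 : 0 < z.re⁻¹ := lt_of_lt_of_le hμmin_pos h1
    have h3 : 0 < z.re := inv_pos.mp h2
    have h4 : z.re ≤ μmin⁻¹ := by
      rw [← inv_inv z.re]
      exact inv_anti₀ hμmin_pos h1
    rw [hre, Complex.norm_real, Real.norm_eq_abs, abs_of_pos h3]
    exact h4
  have hAinvnorm : ‖A⁻¹‖ ≤ μmin⁻¹ :=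
    aux_herm_norm_le A⁻¹ hAinv_sa μmin⁻¹ (inv_pos.mpr hμmin_pos).le hAinvspec
  have hWVcinv : W = Vc⁻¹ := (Matrix.inv_eq_right_inv hVcW).symm
  have hWWH : W * Wᴴ = A⁻¹ := by
    rw [hA, Matrix.mul_inv_rev, hWVcinv, Matrix.conjTranspose_nonsing_inv]
  have hWnorm : ‖W‖ ≤ Real.sqrt μmin⁻¹ := by
    have h0 : ‖Wᴴ‖ = ‖W‖ := Matrix.l2_opNorm_conjTranspose W
    have h1 : ‖(Wᴴ)ᴴ * Wᴴ‖ = ‖Wᴴ‖ * ‖Wᴴ‖ := Matrix.l2_opNorm_conjTranspose_mul_self Wᴴ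
    rw [Matrix.conjTranspose_conjTranspose, hWWH, h0] at h1
    have h2 : ‖W‖ * ‖W‖ ≤ μmin⁻¹ := by rw [← h1]; exact hAinvnorm
    have h3 : ‖W‖ = Real.sqrt (‖W‖ ^ 2) := (Real.sqrt_sq (norm_nonneg _)).symm
    rw [h3]
    apply Real.sqrt_le_sqrt
    nlinarith [norm_nonneg W]
  -- supremum
  set S : ℝ := ⨆ i, 1 / ‖p i s‖ with hS
  have hSmem : ∀ i, 1 / ‖p i s‖ ≤ S := by
    intro i
    rw [hS]
    exact le_ciSup (f := fun i => 1 / ‖p i s‖)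
      (Set.Finite.bddAbove (Set.finite_range _)) i
  have hSnonneg : 0 ≤ S := by
    have := hSmem ⟨0, hN⟩
    have h0 : 0 ≤ 1 / ‖p ⟨0, hN⟩ s‖ := by positivity
    linarith
  have hD'norm : ‖D'‖ ≤ S := by
    apply aux_diag_norm_le _ _ hSnonneg
    intro i
    rw [norm_inv]
    have : ‖d i‖ = ‖p i s‖ := rfl
    rw [this, inv_eq_one_div]
    exact hSmem i
  -- final combination
  rw [← Matrix.cstar_norm_def, hHinv]
  have hfinal : ‖Vc * D' * W‖ ≤ Real.sqrt μmax * S * Real.sqrt μmin⁻¹ := by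
    calc ‖Vc * D' * W‖ ≤ ‖Vc * D'‖ * ‖W‖ := norm_mul_le _ _
      _ ≤ (‖Vc‖ * ‖D'‖) * ‖W‖ :=
          mul_le_mul_of_nonneg_right (norm_mul_le _ _) (norm_nonneg _)
      _ ≤ (Real.sqrt μmax * S) * Real.sqrt μmin⁻¹ := by
          apply mul_le_mul _ hWnorm (norm_nonneg _) (by positivity)
          exact mul_le_mul hVcnorm hD'norm (norm_nonneg _) (Real.sqrt_nonneg _)
  refine hfinal.trans (le_of_eq ?_)
  rw [show Real.sqrt μmax * S * Real.sqrt μmin⁻¹ =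
    (Real.sqrt μmax * Real.sqrt μmin⁻¹) * S by ring]
  rw [← Real.sqrt_mul hμmax_pos.le, ← div_eq_mul_inv]
end

section
/- (Bounded real lemma, sufficiency.) Let A be an n×n real matrix, B an n×1 real matrix, C a 1×n real matrix, and γ > 0. Suppose there exists a symmetric positive definite n×n real matrix P such that AᵀP + PA + γ⁻²·P·B·Bᵀ·P + Cᵀ·C is negative definite. Then every eigenvalue of A has negative real part, and for every real ω the matrix iω·I_n − A is invertible and the unique entry g(iω) of the 1×1 complex matrix C·(iω·I_n − A)⁻¹·B satisfies |g(iω)| < γ. -/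
open Matrix Polynomial

section BRLHelpers

variable {n : ℕ}

private lemma star_map_mulVec {m k : ℕ} (M : Matrix (Fin m) (Fin k) ℝ) (u : Fin k → ℂ) :
    star ((M.map (Complex.ofReal : ℝ → ℂ)) *ᵥ u) = (M.map Complex.ofReal) *ᵥ star u := by
  funext i
  simp [Matrix.mulVec, dotProduct, map_sum]

private lemma dot_sym {m k : ℕ} (M : Matrix (Fin m) (Fin k) ℝ) (x : Fin m → ℂ) (y : Fin k → ℂ) :
    x ⬝ᵥ ((M.map (Complex.ofReal : ℝ → ℂ)) *ᵥ y)
      = ((Mᵀ.map Complex.ofReal) *ᵥ x) ⬝ᵥ y := by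
  rw [Matrix.dotProduct_mulVec, Matrix.transpose_map, Matrix.mulVec_transpose]

private lemma conj_quad (M : Matrix (Fin n) (Fin n) ℝ) (hM : Mᵀ = M) (x y : Fin n → ℂ) :
    star (star x ⬝ᵥ ((M.map (Complex.ofReal : ℝ → ℂ)) *ᵥ y))
      = star y ⬝ᵥ ((M.map Complex.ofReal) *ᵥ x) := by
  rw [← Matrix.star_dotProduct_star, star_star, star_map_mulVec, dot_sym, hM]

private lemma re_quad (Q : Matrix (Fin n) (Fin n) ℝ) (x : Fin n → ℂ) :
    (star x ⬝ᵥ ((Q.map (Complex.ofReal : ℝ → ℂ)) *ᵥ x)).re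
      = (fun i => (x i).re) ⬝ᵥ (Q *ᵥ fun i => (x i).re)
        + (fun i => (x i).im) ⬝ᵥ (Q *ᵥ fun i => (x i).im) := by
  simp only [dotProduct, Matrix.mulVec, Matrix.map_apply, Pi.star_apply,
    Finset.mul_sum, Complex.re_sum, ← Finset.sum_add_distrib]
  refine Finset.sum_congr rfl fun i _ => ?_
  refine Finset.sum_congr rfl fun j _ => ?_
  simp only [RCLike.star_def, Complex.mul_re, Complex.mul_im, Complex.conj_re, Complex.conj_im,
    Complex.ofReal_re, Complex.ofReal_im]
  ring

private lemma posdef_complex {Q : Matrix (Fin n) (Fin n) ℝ} (hQ : Q.PosDef)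
    (x : Fin n → ℂ) (hx : x ≠ 0) :
    0 < (star x ⬝ᵥ ((Q.map (Complex.ofReal : ℝ → ℂ)) *ᵥ x)).re := by
  rw [re_quad]
  set a : Fin n → ℝ := fun i => (x i).re with ha
  set b : Fin n → ℝ := fun i => (x i).im with hb
  have hab : a ≠ 0 ∨ b ≠ 0 := by
    by_contra h
    push_neg at h
    apply hx
    funext i
    exact Complex.ext (by simpa using congrFun h.1 i) (by simpa using congrFun h.2 i)
  rcases hab with h | h
  · have h1 := hQ.dotProduct_mulVec_pos h
    have h2 := hQ.posSemidef.dotProduct_mulVec_nonneg b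
    simp only [star_trivial] at h1 h2
    linarith [h1, h2]
  · have h1 := hQ.posSemidef.dotProduct_mulVec_nonneg a
    have h2 := hQ.dotProduct_mulVec_pos h
    simp only [star_trivial] at h1 h2
    linarith [h1, h2]

private lemma map_mul' {l m o : ℕ} (M : Matrix (Fin l) (Fin m) ℝ) (N : Matrix (Fin m) (Fin o) ℝ) :
    (M * N).map (Complex.ofReal : ℝ → ℂ) = M.map Complex.ofReal * N.map Complex.ofReal :=
  Matrix.map_mul (f := Complex.ofRealHom)

private lemma quad_factor {m k : ℕ} (M : Matrix (Fin m) (Fin k) ℝ) (x : Fin k → ℂ) :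
    star x ⬝ᵥ (((Mᵀ * M).map (Complex.ofReal : ℝ → ℂ)) *ᵥ x)
      = star ((M.map Complex.ofReal) *ᵥ x) ⬝ᵥ ((M.map Complex.ofReal) *ᵥ x) := by
  rw [map_mul', ← Matrix.mulVec_mulVec, dot_sym, Matrix.transpose_transpose,
    ← star_map_mulVec]

private lemma star_dot_self (v : Fin 1 → ℂ) :
    star v ⬝ᵥ v = (Complex.normSq (v 0) : ℂ) := by
  simp [dotProduct, Fin.sum_univ_one, Complex.normSq_eq_conj_mul_self]

private lemma map_add' {m k : ℕ} (M N : Matrix (Fin m) (Fin k) ℝ) :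
    (M + N).map (Complex.ofReal : ℝ → ℂ) = M.map Complex.ofReal + N.map Complex.ofReal := by
  ext i j; simp

private lemma map_smul₂ {m k : ℕ} (r : ℝ) (M : Matrix (Fin m) (Fin k) ℝ) :
    (r • M).map (Complex.ofReal : ℝ → ℂ) = r • M.map Complex.ofReal := by
  ext i j; simp

private lemma map_neg' {m k : ℕ} (M : Matrix (Fin m) (Fin k) ℝ) :
    (-M).map (Complex.ofReal : ℝ → ℂ) = -(M.map Complex.ofReal) := by
  ext i j; simp

private lemma master (A : Matrix (Fin n) (Fin n) ℝ) (B : Matrix (Fin n) (Fin 1) ℝ)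
    (C : Matrix (Fin 1) (Fin n) ℝ) (γ : ℝ) (P : Matrix (Fin n) (Fin n) ℝ) (hPs : Pᵀ = P)
    (x : Fin n → ℂ) :
    (star x ⬝ᵥ (((Aᵀ * P + P * A + (γ ^ 2)⁻¹ • (P * B * Bᵀ * P) + Cᵀ * C).map
        (Complex.ofReal : ℝ → ℂ)) *ᵥ x)).re
      = 2 * (star x ⬝ᵥ ((P.map Complex.ofReal) *ᵥ ((A.map Complex.ofReal) *ᵥ x))).re
        + (γ ^ 2)⁻¹ * Complex.normSq ((((Bᵀ * P).map Complex.ofReal) *ᵥ x) 0)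
        + Complex.normSq (((C.map Complex.ofReal) *ᵥ x) 0) := by
  have hBP : P * B * Bᵀ * P = (Bᵀ * P)ᵀ * (Bᵀ * P) := by
    rw [Matrix.transpose_mul, Matrix.transpose_transpose, hPs, Matrix.mul_assoc]
  rw [hBP, map_add', map_add', map_add', map_smul₂]
  rw [Matrix.add_mulVec, Matrix.add_mulVec, Matrix.add_mulVec]
  rw [dotProduct_add, dotProduct_add, dotProduct_add]
  rw [Matrix.smul_mulVec, dotProduct_smul]
  rw [quad_factor, quad_factor, star_dot_self, star_dot_self]
  rw [map_mul' Aᵀ P, ← Matrix.mulVec_mulVec, dot_sym Aᵀ, Matrix.transpose_transpose,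
    ← star_map_mulVec]
  rw [map_mul' P A, ← Matrix.mulVec_mulVec]
  rw [← conj_quad P hPs x (A.map Complex.ofReal *ᵥ x)]
  simp only [Complex.add_re, Complex.ofReal_re, RCLike.star_def, Complex.conj_re,
    Complex.real_smul, Complex.mul_re, Complex.ofReal_im, Complex.ofReal_re]
  ring

private lemma charpoly_eval (M : Matrix (Fin n) (Fin n) ℂ) (z : ℂ) :
    M.charpoly.eval z = (z • (1 : Matrix (Fin n) (Fin n) ℂ) - M).det := by
  rw [Matrix.charpoly, eval_det, Matrix.matPolyEquiv_charmatrix]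
  simp [smul_one_eq_diagonal]

end BRLHelpers

/-- Bounded real lemma (sufficiency): if there is a symmetric positive definite `P` with
`AᵀP + PA + γ⁻² P B Bᵀ P + Cᵀ C` negative definite, then `A` is Hurwitz and the transfer
function `g(iω) = C (iω I - A)⁻¹ B` satisfies `|g(iω)| < γ` for every real `ω`. -/
theorem stmt_12 (n : ℕ) (A : Matrix (Fin n) (Fin n) ℝ) (B : Matrix (Fin n) (Fin 1) ℝ)
    (C : Matrix (Fin 1) (Fin n) ℝ) (γ : ℝ) (hγ : 0 < γ)
    (P : Matrix (Fin n) (Fin n) ℝ) (hP : P.PosDef)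
    (hLyap : (-(Aᵀ * P + P * A + (γ ^ 2)⁻¹ • (P * B * Bᵀ * P) + Cᵀ * C)).PosDef) :
    (∀ z : ℂ, (A.charpoly.map (algebraMap ℝ ℂ)).IsRoot z → z.re < 0) ∧
    ∀ ω : ℝ,
      IsUnit ((Complex.I * (ω : ℂ)) • (1 : Matrix (Fin n) (Fin n) ℂ) -
        A.map (Complex.ofReal : ℝ → ℂ)).det ∧
      ‖(C.map (Complex.ofReal : ℝ → ℂ) *
        ((Complex.I * (ω : ℂ)) • (1 : Matrix (Fin n) (Fin n) ℂ) -
          A.map (Complex.ofReal : ℝ → ℂ))⁻¹ *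
        B.map (Complex.ofReal : ℝ → ℂ)) 0 0‖ < γ := by
  have hPs : Pᵀ = P := by
    ext i j
    have := congrFun (congrFun hP.1 i) j
    simpa using this
  set S : Matrix (Fin n) (Fin n) ℝ :=
    Aᵀ * P + P * A + (γ ^ 2)⁻¹ • (P * B * Bᵀ * P) + Cᵀ * C with hS
  set A' := A.map (Complex.ofReal : ℝ → ℂ) with hA'
  set P' := P.map (Complex.ofReal : ℝ → ℂ) with hP'
  -- the negated quadratic form
  have hneg : ∀ x : Fin n → ℂ, (star x ⬝ᵥ (((-S).map (Complex.ofReal : ℝ → ℂ)) *ᵥ x)).re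
      = -(star x ⬝ᵥ ((S.map (Complex.ofReal : ℝ → ℂ)) *ᵥ x)).re := by
    intro x
    rw [map_neg', Matrix.neg_mulVec, dotProduct_neg, Complex.neg_re]
  have hpim : ∀ x : Fin n → ℂ, (star x ⬝ᵥ (P' *ᵥ x)).im = 0 := by
    intro x
    have h := conj_quad P hPs x x
    have h2 := congrArg Complex.im h
    simp only [RCLike.star_def, Complex.conj_im] at h2
    rw [← hP'] at h2
    linarith
  -- key eigenvalue lemma
  have key : ∀ (x : Fin n → ℂ), x ≠ 0 → ∀ z : ℂ, A' *ᵥ x = z • x → z.re < 0 := by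
    intro x hx z hz
    have hq := posdef_complex hLyap x hx
    rw [hneg] at hq
    have hp := posdef_complex hP x hx
    have hm := master A B C γ P hPs x
    rw [← hA', ← hP', ← hS] at hm
    rw [hz, Matrix.mulVec_smul, dotProduct_smul, smul_eq_mul, Complex.mul_re,
      hpim x, mul_zero, sub_zero] at hm
    have h3 : 0 ≤ Complex.normSq ((((Bᵀ * P).map Complex.ofReal) *ᵥ x) 0) :=
      Complex.normSq_nonneg _
    have h4 : 0 ≤ Complex.normSq (((C.map Complex.ofReal) *ᵥ x) 0) := Complex.normSq_nonneg _
    have h5 : (0:ℝ) ≤ (γ ^ 2)⁻¹ := by positivity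
    rw [← hP'] at hp
    nlinarith [mul_nonneg h5 h3]
  constructor
  · intro z hz
    have h1 : (A.map (Complex.ofReal : ℝ → ℂ)).charpoly = A.charpoly.map (algebraMap ℝ ℂ) :=
      Matrix.charpoly_map A (algebraMap ℝ ℂ)
    have hdet : (z • (1 : Matrix (Fin n) (Fin n) ℂ) - A').det = 0 := by
      rw [← charpoly_eval, hA', h1]; exact hz
    obtain ⟨v, hv, hv0⟩ := (Matrix.exists_mulVec_eq_zero_iff).mpr hdet
    have hAv : A' *ᵥ v = z • v := by
      have := hv0
      rw [Matrix.sub_mulVec, Matrix.smul_mulVec, Matrix.one_mulVec, sub_eq_zero] at this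
      exact this.symm
    exact key v hv z hAv
  · intro ω
    set z : ℂ := Complex.I * (ω : ℂ) with hzdef
    set M : Matrix (Fin n) (Fin n) ℂ := z • (1 : Matrix (Fin n) (Fin n) ℂ) - A' with hM
    have hzre : z.re = 0 := by simp [hzdef]
    have hdet : M.det ≠ 0 := by
      intro h
      obtain ⟨v, hv, hv0⟩ := (Matrix.exists_mulVec_eq_zero_iff).mpr h
      have hAv : A' *ᵥ v = z • v := by
        rw [hM, Matrix.sub_mulVec, Matrix.smul_mulVec, Matrix.one_mulVec,
          sub_eq_zero] at hv0
        exact hv0.symm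
      have := key v hv z hAv
      rw [hzre] at this
      exact lt_irrefl 0 this
    have hunit : IsUnit M.det := isUnit_iff_ne_zero.mpr hdet
    refine ⟨hunit, ?_⟩
    set b : Fin n → ℂ := fun j => ((B j 0 : ℝ) : ℂ) with hb
    set x : Fin n → ℂ := M⁻¹ *ᵥ b with hx
    have hMx : M *ᵥ x = b := by
      rw [hx, Matrix.mulVec_mulVec, Matrix.mul_nonsing_inv M hunit, Matrix.one_mulVec]
    have hAx : A' *ᵥ x = z • x - b := by
      rw [hM, Matrix.sub_mulVec, Matrix.smul_mulVec, Matrix.one_mulVec] at hMx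
      rw [← hMx]; ring_nf
    -- the entry equals (C' *ᵥ x) 0
    have hG : (C.map (Complex.ofReal : ℝ → ℂ) * M⁻¹ * B.map (Complex.ofReal : ℝ → ℂ)) 0 0
        = ((C.map (Complex.ofReal : ℝ → ℂ)) *ᵥ x) 0 := by
      rw [Matrix.mul_assoc]
      simp only [Matrix.mul_apply, Matrix.mulVec, dotProduct, hx, Matrix.map_apply, hb]
    rw [hG]
    by_cases hx0 : x = 0
    · have h0 : ((C.map (Complex.ofReal : ℝ → ℂ)) *ᵥ x) 0 = 0 := by
        rw [hx0]; simp
      rw [h0]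
      simpa using hγ
    · set s0 : ℂ := (((Bᵀ * P).map (Complex.ofReal : ℝ → ℂ)) *ᵥ x) 0 with hs0
      have hs0' : s0 = star b ⬝ᵥ (P' *ᵥ x) := by
        rw [hs0, map_mul', ← Matrix.mulVec_mulVec, ← hP']
        simp [Matrix.mulVec, dotProduct, hb, Matrix.map_apply, Matrix.transpose_apply]
      have hd : star x ⬝ᵥ (P' *ᵥ b) = star s0 := by
        rw [hs0']; exact (conj_quad P hPs b x).symm
      have hterm : (star x ⬝ᵥ (P' *ᵥ (A' *ᵥ x))).re = -s0.re := by
        rw [hAx, Matrix.mulVec_sub, Matrix.mulVec_smul, dotProduct_sub,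
          dotProduct_smul, smul_eq_mul, Complex.sub_re, Complex.mul_re, hpim x, hzre, hd]
        simp
      have hq := posdef_complex hLyap x hx0
      rw [hneg] at hq
      have hm := master A B C γ P hPs x
      rw [← hA', ← hP', ← hS, ← hs0, hterm] at hm
      set g0 : ℂ := ((C.map (Complex.ofReal : ℝ → ℂ)) *ᵥ x) 0 with hg0
      have hns : Complex.normSq s0 = s0.re ^ 2 + s0.im ^ 2 := by
        rw [Complex.normSq_apply]; ring
      have h2 : (0:ℝ) < (γ ^ 2)⁻¹ := by positivity
      have h3 : (γ ^ 2)⁻¹ * γ ^ 2 = 1 := inv_mul_cancel₀ (by positivity)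
      have h4 : (γ ^ 2)⁻¹ * (γ ^ 2 - s0.re) ^ 2
          = γ ^ 2 - 2 * s0.re + (γ ^ 2)⁻¹ * s0.re ^ 2 := by
        field_simp
        ring
      have h5 : 0 ≤ (γ ^ 2)⁻¹ * (γ ^ 2 - s0.re) ^ 2 := by positivity
      rw [hns] at hm
      have habs : ‖g0‖ ^ 2 < γ ^ 2 := by
        rw [Complex.sq_norm]
        nlinarith [h4, h5, mul_nonneg h2.le (sq_nonneg s0.im)]
      nlinarith [norm_nonneg g0, habs]
end

section
/- Let A be an n×n real matrix, B₁ and B₂ n×1 real matrices, C₁ a 1×n real matrix, γ_d > 0, α > 0, and let Q be a symmetric positive definite n×n real matrix such that the symmetric (n+2)×(n+2) block matrix [[AQ + QAᵀ − α·B₁B₁ᵀ, B₂, QC₁ᵀ],[B₂ᵀ, −γ_d², 0],[C₁Q, 0, −1]] is negative definite. Define the feedback gain by kᵀ = (1/2)·B₁ᵀ·Q⁻¹. Then for every real μ with μ ≥ α, the matrix (A − μ·B₁kᵀ)·Q + Q·(A − μ·B₁kᵀ)ᵀ + γ_d⁻²·B₂B₂ᵀ + Q·C₁ᵀC₁·Q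 is negative definite. -/
open Matrix

private lemma posDef_schur₂₂ {m p : Type*} [Fintype m] [Fintype p] [DecidableEq p]
    (A : Matrix m m ℝ) (B : Matrix m p ℝ) {D : Matrix p p ℝ} (hD : D.PosDef)
    (h : (Matrix.fromBlocks A B Bᴴ D).PosDef) : (A - B * D⁻¹ * Bᴴ).PosDef := by
  haveI : Invertible D := D.invertibleOfIsUnitDet (isUnit_iff_isUnit_det D |>.mp hD.isUnit)
  refine Matrix.PosDef.of_dotProduct_mulVec_pos ((Matrix.IsHermitian.fromBlocks₂₂ A B hD.1).mp h.1) fun x hx => ?_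
  set y : p → ℝ := -((D⁻¹ * Bᴴ) *ᵥ x) with hy
  have hxy : Sum.elim x y ≠ 0 := by
    intro hc
    exact hx (funext fun i => congrFun hc (Sum.inl i))
  have := h.dotProduct_mulVec_pos hxy
  rw [dotProduct_mulVec, Matrix.schur_complement_eq₂₂ A B x y hD.1] at this
  have hzero : (D⁻¹ * Bᴴ) *ᵥ x + y = 0 := by simp [hy]
  rw [hzero] at this
  simpa [dotProduct_mulVec] using this

/-- LMI feasibility implies the decoupled Riccati-type inequality: with
`kᵀ = ½ B₁ᵀ Q⁻¹`, for every `μ ≥ α` the matrix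
`(A - μ B₁kᵀ)Q + Q(A - μ B₁kᵀ)ᵀ + γ_d⁻² B₂B₂ᵀ + Q C₁ᵀC₁ Q` is negative definite. -/
theorem stmt_13 (n : ℕ) (A : Matrix (Fin n) (Fin n) ℝ)
    (B1 B2 : Matrix (Fin n) (Fin 1) ℝ) (C1 : Matrix (Fin 1) (Fin n) ℝ)
    (γd α : ℝ) (hγd : 0 < γd) (hα : 0 < α)
    (Q : Matrix (Fin n) (Fin n) ℝ) (hQ : Q.PosDef)
    (LMI : Matrix (Fin n ⊕ (Fin 1 ⊕ Fin 1)) (Fin n ⊕ (Fin 1 ⊕ Fin 1)) ℝ)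
    (hLMI : LMI = Matrix.fromBlocks
      (A * Q + Q * Aᵀ - α • (B1 * B1ᵀ)) (Matrix.fromCols B2 (Q * C1ᵀ))
      (Matrix.fromRows B2ᵀ (C1 * Q))
      (Matrix.fromBlocks (-(γd ^ 2) • (1 : Matrix (Fin 1) (Fin 1) ℝ)) 0 0
        (-1 : Matrix (Fin 1) (Fin 1) ℝ)))
    (hneg : (-LMI).PosDef)
    (kT : Matrix (Fin 1) (Fin n) ℝ) (hkT : kT = (1 / 2 : ℝ) • (B1ᵀ * Q⁻¹))
    (μ : ℝ) (hμ : α ≤ μ) :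
    (-((A - μ • (B1 * kT)) * Q + Q * (A - μ • (B1 * kT))ᵀ +
        (γd ^ 2)⁻¹ • (B2 * B2ᵀ) + Q * C1ᵀ * C1 * Q)).PosDef := by
  have hγd2 : (0:ℝ) < γd ^ 2 := by positivity
  have hQdet : IsUnit Q.det := isUnit_iff_isUnit_det Q |>.mp hQ.isUnit
  have hQT : Qᵀ = Q := by
    have := hQ.isHermitian
    rwa [Matrix.IsHermitian, Matrix.conjTranspose_eq_transpose_of_trivial] at this
  -- the (2,2) diagonal block of -LMI
  set D : Matrix (Fin 1 ⊕ Fin 1) (Fin 1 ⊕ Fin 1) ℝ :=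
    Matrix.fromBlocks ((γd ^ 2) • (1 : Matrix (Fin 1) (Fin 1) ℝ)) 0 0 1 with hD
  have hDdiag : D = Matrix.diagonal (Sum.elim (fun _ => γd ^ 2) (fun _ => (1:ℝ))) := by
    ext (i | i) (j | j) <;>
      simp [hD, Matrix.fromBlocks, Matrix.diagonal, Matrix.one_apply,
        Fin.fin_one_eq_zero i, Fin.fin_one_eq_zero j]
  have hDpos : D.PosDef := by
    rw [hDdiag, Matrix.posDef_diagonal_iff]
    rintro (i | i) <;> simp [hγd2]
  have hDinv : D⁻¹ = Matrix.fromBlocks ((γd ^ 2)⁻¹ • (1 : Matrix (Fin 1) (Fin 1) ℝ)) 0 0 1 := by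
    apply Matrix.inv_eq_right_inv
    rw [hD, Matrix.fromBlocks_multiply]
    simp [smul_smul, mul_inv_cancel₀ hγd2.ne', inv_mul_cancel₀ hγd2.ne',
      Matrix.fromBlocks_one]
  set Bblk : Matrix (Fin n) (Fin 1 ⊕ Fin 1) ℝ :=
    -(Matrix.fromCols B2 (Q * C1ᵀ)) with hBblk
  set A0 : Matrix (Fin n) (Fin n) ℝ := -(A * Q + Q * Aᵀ - α • (B1 * B1ᵀ)) with hA0
  have hBblkH : Bblkᴴ = -(Matrix.fromRows B2ᵀ (C1 * Q)) := by
    rw [hBblk, Matrix.conjTranspose_neg, Matrix.conjTranspose_eq_transpose_of_trivial,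
      Matrix.transpose_fromCols, Matrix.transpose_mul, Matrix.transpose_transpose, hQT]
  have hblocks : -LMI = Matrix.fromBlocks A0 Bblk Bblkᴴ D := by
    rw [hLMI, hBblkH, hA0, hBblk, hD]
    ext (i | (i | i)) (j | (j | j)) <;>
      simp [Matrix.fromBlocks, Matrix.fromCols, Matrix.fromRows]
  rw [hblocks] at hneg
  have hSchur : (A0 - Bblk * D⁻¹ * Bblkᴴ).PosDef := posDef_schur₂₂ A0 Bblk hDpos hneg
  have hprod : Bblk * D⁻¹ * Bblkᴴ =
      (γd ^ 2)⁻¹ • (B2 * B2ᵀ) + Q * C1ᵀ * (C1 * Q) := by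
    rw [hBblkH, hBblk, hDinv]
    simp only [Matrix.neg_mul, Matrix.mul_neg, neg_neg]
    rw [Matrix.fromCols_mul_fromBlocks, Matrix.fromCols_mul_fromRows]
    simp [Matrix.mul_smul, Matrix.smul_mul, Matrix.mul_assoc]
  -- algebra for the feedback term
  have hkQ : B1 * kT * Q = (1 / 2 : ℝ) • (B1 * B1ᵀ) := by
    rw [hkT, Matrix.mul_smul, Matrix.smul_mul, Matrix.mul_assoc,
      Matrix.nonsing_inv_mul_cancel_right _ _ hQdet]
  have hQk : Q * (B1 * kT)ᵀ = (1 / 2 : ℝ) • (B1 * B1ᵀ) := by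
    rw [hkT, Matrix.mul_smul, Matrix.transpose_smul, Matrix.mul_smul, Matrix.transpose_mul,
      Matrix.transpose_mul, Matrix.transpose_nonsing_inv, hQT, Matrix.transpose_transpose,
      Matrix.mul_assoc Q⁻¹, Matrix.mul_nonsing_inv_cancel_left _ _ hQdet]
  -- rewrite the goal matrix as (Schur complement) + (μ - α) • B1 B1ᵀ
  have key : -((A - μ • (B1 * kT)) * Q + Q * (A - μ • (B1 * kT))ᵀ +
        (γd ^ 2)⁻¹ • (B2 * B2ᵀ) + Q * C1ᵀ * C1 * Q)
      = (A0 - Bblk * D⁻¹ * Bblkᴴ) + (μ - α) • (B1 * B1ᵀ) := by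
    rw [hprod, hA0, Matrix.sub_mul, Matrix.transpose_sub, Matrix.mul_sub,
      Matrix.transpose_smul, Matrix.smul_mul, Matrix.mul_smul, hkQ, hQk, Matrix.mul_assoc]
    module
  rw [key]
  refine hSchur.add_posSemidef ?_
  have h1 : (B1 * B1ᵀ).PosSemidef := by
    have := Matrix.posSemidef_self_mul_conjTranspose B1
    rwa [Matrix.conjTranspose_eq_transpose_of_trivial] at this
  refine Matrix.PosSemidef.of_dotProduct_mulVec_nonneg ?_ fun x => ?_
  · rw [Matrix.IsHermitian, Matrix.conjTranspose_smul, h1.1.eq]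
    simp
  · rw [Matrix.smul_mulVec, dotProduct_smul]
    exact smul_nonneg (by linarith) (h1.dotProduct_mulVec_nonneg x)
end

section
/- Let A be an n×n real matrix, B₁ and B₂ n×1 real matrices, C₁ a 1×n real matrix, γ_d > 0, α > 0, and let Q be a symmetric positive definite n×n real matrix such that the symmetric (n+2)×(n+2) block matrix [[AQ + QAᵀ − α·B₁B₁ᵀ, B₂, QC₁ᵀ],[B₂ᵀ, −γ_d², 0],[C₁Q, 0, −1]] is negative definite. Define kᵀ = (1/2)·B₁ᵀ·Q⁻¹ and let μ ∈ ℝ with μ ≥ α. Then every eigenvalue of A − μ·B₁kᵀ has negative real part, and for every real ω the matrix iω·I_n − (A − μ·B₁kᵀ) is invertible and the unique entry g(iω) of the 1×1 complex matrix C₁·(iω·I_n − A + μ·B₁kᵀ)⁻¹·B₂ satisfies |g(iω)| < γ_d. -/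
open Matrix Polynomial


namespace Stmt14Aux

variable {n : ℕ}

lemma colvT_mulVec {α : Type*} [CommRing α] (B : Matrix (Fin n) (Fin 1) α) (y : Fin n → α) :
    Bᵀ *ᵥ y = fun _ => (fun i => B i 0) ⬝ᵥ y := by
  funext j
  rw [Subsingleton.elim j 0]
  simp [mulVec, dotProduct, transpose_apply]

lemma colv_mulVec {α : Type*} [CommRing α] (B : Matrix (Fin n) (Fin 1) α) (u : Fin 1 → α) :
    B *ᵥ u = u 0 • (fun i => B i 0) := by
  funext i
  simp [mulVec, dotProduct, mul_comm]

lemma symm_move {α : Type*} [CommRing α] {M : Matrix (Fin n) (Fin n) α} (hM : Mᵀ = M)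
    (x z : Fin n → α) : x ⬝ᵥ (M *ᵥ z) = (M *ᵥ x) ⬝ᵥ z := by
  rw [dotProduct_mulVec, ← hM, vecMul_transpose, hM]

lemma trans_dot {α : Type*} [CommRing α] (M : Matrix (Fin n) (Fin n) α) (x y : Fin n → α) :
    x ⬝ᵥ (Mᵀ *ᵥ y) = y ⬝ᵥ (M *ᵥ x) := by
  rw [dotProduct_mulVec, vecMul_transpose, dotProduct_comm]

lemma re_split (M : Matrix (Fin n) (Fin n) ℝ) (v : Fin n → ℂ) :
    (star v ⬝ᵥ (M.map (Complex.ofReal)) *ᵥ v).re =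
      (fun i => (v i).re) ⬝ᵥ M *ᵥ (fun i => (v i).re) +
      (fun i => (v i).im) ⬝ᵥ M *ᵥ (fun i => (v i).im) := by
  simp only [dotProduct, mulVec, Matrix.map_apply, Pi.star_apply]
  rw [Complex.re_sum, ← Finset.sum_add_distrib]
  refine Finset.sum_congr rfl fun i _ => ?_
  simp only [Complex.mul_re, Complex.re_sum, Complex.im_sum, Complex.mul_im,
    Complex.ofReal_re, Complex.ofReal_im, Complex.conj_re, Complex.conj_im,
    Complex.star_def, Finset.mul_sum]
  rw [← Finset.sum_add_distrib]
  exact Finset.sum_congr rfl fun j _ => by ring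

lemma mulVec_star (M : Matrix (Fin n) (Fin n) ℝ) (v : Fin n → ℂ) :
    (M.map Complex.ofReal) *ᵥ (star v) = star ((M.map Complex.ofReal) *ᵥ v) := by
  funext i
  simp [mulVec, dotProduct, Complex.star_def, map_sum, Complex.conj_ofReal]

lemma mapC_mul {m k l : Type*} [Fintype k] (M : Matrix m k ℝ) (N : Matrix k l ℝ) :
    (M * N).map Complex.ofReal = M.map Complex.ofReal * N.map Complex.ofReal := by
  ext i j
  push_cast [Matrix.mul_apply, Matrix.map_apply]
  rfl

lemma mapC_add {m k : Type*} (M N : Matrix m k ℝ) :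
    (M + N).map Complex.ofReal = M.map Complex.ofReal + N.map Complex.ofReal := by
  ext i j; simp

lemma mapC_smul {m k : Type*} (r : ℝ) (M : Matrix m k ℝ) :
    (r • M).map Complex.ofReal = (r : ℂ) • M.map Complex.ofReal := by
  ext i j; simp

lemma mapC_transpose {m k : Type*} (M : Matrix m k ℝ) :
    Mᵀ.map Complex.ofReal = (M.map Complex.ofReal)ᵀ := by
  ext i j; simp

lemma eval_charpolyC (M : Matrix (Fin n) (Fin n) ℂ) (z : ℂ) :
    M.charpoly.eval z = (z • (1 : Matrix (Fin n) (Fin n) ℂ) - M).det := by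
  rw [Matrix.charpoly, ← Polynomial.coe_evalRingHom, RingHom.map_det]
  congr 1
  ext i j
  by_cases h : i = j <;>
    simp [h, charmatrix_apply, Matrix.one_apply, Matrix.diagonal_apply, Matrix.sub_apply,
      Matrix.smul_apply]

end Stmt14Aux


section
open Stmt14Aux

set_option maxHeartbeats 2000000 in
/-- Decoupled-subsystem form of the distributed H∞ synthesis theorem: under the LMI,
with `kᵀ = ½ B₁ᵀ Q⁻¹` and `μ ≥ α`, the matrix `A - μ B₁kᵀ` is Hurwitz and the transfer
function `g(iω) = C₁ (iω I - A + μ B₁kᵀ)⁻¹ B₂` satisfies `|g(iω)| < γ_d`. -/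
theorem stmt_14 (n : ℕ) (A : Matrix (Fin n) (Fin n) ℝ)
    (B1 B2 : Matrix (Fin n) (Fin 1) ℝ) (C1 : Matrix (Fin 1) (Fin n) ℝ)
    (γd α : ℝ) (hγd : 0 < γd) (hα : 0 < α)
    (Q : Matrix (Fin n) (Fin n) ℝ) (hQ : Q.PosDef)
    (LMI : Matrix (Fin n ⊕ (Fin 1 ⊕ Fin 1)) (Fin n ⊕ (Fin 1 ⊕ Fin 1)) ℝ)
    (hLMI : LMI = Matrix.fromBlocks
      (A * Q + Q * Aᵀ - α • (B1 * B1ᵀ)) (Matrix.fromCols B2 (Q * C1ᵀ))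
      (Matrix.fromRows B2ᵀ (C1 * Q))
      (Matrix.fromBlocks (-(γd ^ 2) • (1 : Matrix (Fin 1) (Fin 1) ℝ)) 0 0
        (-1 : Matrix (Fin 1) (Fin 1) ℝ)))
    (hneg : (-LMI).PosDef)
    (kT : Matrix (Fin 1) (Fin n) ℝ) (hkT : kT = (1 / 2 : ℝ) • (B1ᵀ * Q⁻¹))
    (μ : ℝ) (hμ : α ≤ μ) :
    (∀ z : ℂ, ((A - μ • (B1 * kT)).charpoly.map (algebraMap ℝ ℂ)).IsRoot z → z.re < 0) ∧
    ∀ ω : ℝ,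
      IsUnit ((Complex.I * (ω : ℂ)) • (1 : Matrix (Fin n) (Fin n) ℂ) -
        (A - μ • (B1 * kT)).map (Complex.ofReal : ℝ → ℂ)).det ∧
      ‖(C1.map (Complex.ofReal : ℝ → ℂ) *
        ((Complex.I * (ω : ℂ)) • (1 : Matrix (Fin n) (Fin n) ℂ) -
          A.map (Complex.ofReal : ℝ → ℂ) +
          μ • (B1 * kT).map (Complex.ofReal : ℝ → ℂ))⁻¹ *
        B2.map (Complex.ofReal : ℝ → ℂ)) 0 0‖ < γd := by
  have hγd' : γd ≠ 0 := hγd.ne'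
  set P := Q⁻¹ with hP_def
  have hQd : IsUnit Q.det := isUnit_iff_ne_zero.mpr (ne_of_gt hQ.det_pos)
  have hQP : Q * P = 1 := Q.mul_nonsing_inv hQd
  have hPQ : P * Q = 1 := Q.nonsing_inv_mul hQd
  have hQsym : Qᵀ = Q := by
    rw [← Matrix.conjTranspose_eq_transpose_of_trivial]; exact hQ.isHermitian
  have hPsym : Pᵀ = P := by
    rw [hP_def, Matrix.transpose_nonsing_inv, hQsym]
  have hP : P.PosDef := hQ.inv
  set Ac := A - μ • (B1 * kT) with hAc_def
  set R := P * Ac + Acᵀ * P + ((γd⁻¹) ^ 2) • (P * ((B2 * B2ᵀ) * P)) + C1ᵀ * C1 with hR_def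
  set b1 : Fin n → ℝ := fun i => B1 i 0 with hb1
  set b2 : Fin n → ℝ := fun i => B2 i 0 with hb2
  set c : Fin n → ℝ := fun j => C1 0 j with hc
  have hAcx : ∀ x : Fin n → ℝ,
      Ac *ᵥ x = A *ᵥ x - (μ * ((1:ℝ)/2) * (b1 ⬝ᵥ (P *ᵥ x))) • b1 := by
    intro x
    rw [hAc_def, sub_mulVec, smul_mulVec, ← mulVec_mulVec, hkT,
      smul_mulVec, ← mulVec_mulVec, colvT_mulVec, mulVec_smul, colv_mulVec]
    rw [smul_smul, smul_smul]
  have hR : ∀ x : Fin n → ℝ, x ≠ 0 → x ⬝ᵥ R *ᵥ x < 0 := by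
    intro x hx
    set y := P *ᵥ x with hy
    have hyx : Q *ᵥ y = x := by rw [hy, mulVec_mulVec, hQP, one_mulVec]
    have hy0 : y ≠ 0 := fun h => hx (by rw [← hyx, h, mulVec_zero])
    set u : Fin 1 → ℝ := fun _ => (γd⁻¹)^2 * (b2 ⬝ᵥ y) with hu
    set w : Fin 1 → ℝ := fun _ => c ⬝ᵥ x with hw
    have hv0 : Sum.elim y (Sum.elim u w) ≠ 0 :=
      fun h => hy0 (funext fun i => congrFun h (Sum.inl i))
    have hq := hneg.dotProduct_mulVec_pos hv0
    rw [hLMI] at hq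
    have hstar : star (Sum.elim y (Sum.elim u w)) = Sum.elim y (Sum.elim u w) := rfl
    rw [hstar, neg_mulVec, dotProduct_neg] at hq
    -- scalar atoms
    have e1 : y ⬝ᵥ (A * Q) *ᵥ y = y ⬝ᵥ A *ᵥ x := by rw [← mulVec_mulVec, hyx]
    have e2 : y ⬝ᵥ (Q * Aᵀ) *ᵥ y = y ⬝ᵥ A *ᵥ x := by
      rw [← mulVec_mulVec, symm_move hQsym, hyx, trans_dot]
    have e3 : y ⬝ᵥ (B1 * B1ᵀ) *ᵥ y = (b1 ⬝ᵥ y) * (b1 ⬝ᵥ y) := by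
      rw [← mulVec_mulVec, colvT_mulVec, colv_mulVec, dotProduct_smul]
      rw [dotProduct_comm]
      rfl
    have e4 : y ⬝ᵥ (B2 * B2ᵀ) *ᵥ y = (b2 ⬝ᵥ y) * (b2 ⬝ᵥ y) := by
      rw [← mulVec_mulVec, colvT_mulVec, colv_mulVec, dotProduct_smul]
      rw [dotProduct_comm]
      rfl
    have e5 : y ⬝ᵥ B2 *ᵥ u = u 0 * (b2 ⬝ᵥ y) := by
      rw [colv_mulVec, dotProduct_smul, dotProduct_comm]
      rfl
    have e6 : y ⬝ᵥ (Q * C1ᵀ) *ᵥ w = w 0 * (c ⬝ᵥ x) := by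
      rw [← mulVec_mulVec, symm_move hQsym, hyx, colv_mulVec, dotProduct_smul,
        dotProduct_comm]
      rfl
    have e7 : u ⬝ᵥ B2ᵀ *ᵥ y = u 0 * (b2 ⬝ᵥ y) := by
      rw [colvT_mulVec]
      simp [dotProduct, hb2]
    have e8 : w ⬝ᵥ (C1 * Q) *ᵥ y = w 0 * (c ⬝ᵥ x) := by
      rw [← mulVec_mulVec, hyx, show C1 = (C1ᵀ)ᵀ from (transpose_transpose C1).symm,
        colvT_mulVec]
      simp [dotProduct, hc]
    have hval : Sum.elim y (Sum.elim u w) ⬝ᵥ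
        (Matrix.fromBlocks (A * Q + Q * Aᵀ - α • (B1 * B1ᵀ))
          (Matrix.fromCols B2 (Q * C1ᵀ)) (Matrix.fromRows B2ᵀ (C1 * Q))
          (Matrix.fromBlocks (-(γd ^ 2) • (1 : Matrix (Fin 1) (Fin 1) ℝ)) 0 0
            (-1 : Matrix (Fin 1) (Fin 1) ℝ))) *ᵥ Sum.elim y (Sum.elim u w) =
        2 * (y ⬝ᵥ A *ᵥ x) - α * ((b1 ⬝ᵥ y) * (b1 ⬝ᵥ y))
          + 2 * (u 0 * (b2 ⬝ᵥ y)) + 2 * (w 0 * (c ⬝ᵥ x))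
          - γd ^ 2 * (u 0 * u 0) - w 0 * w 0 := by
      have e9 : u ⬝ᵥ u = u 0 * u 0 := by simp [dotProduct]
      have e10 : w ⬝ᵥ w = w 0 * w 0 := by simp [dotProduct]
      simp only [fromBlocks_mulVec, fromRows_mulVec, fromCols_mulVec_sumElim,
        Sum.elim_comp_inl, Sum.elim_comp_inr, sumElim_dotProduct_sumElim,
        dotProduct_add, add_mulVec, sub_mulVec, smul_mulVec, dotProduct_sub,
        dotProduct_smul, smul_eq_mul, Matrix.zero_mulVec, dotProduct_zero,
        Matrix.neg_mulVec, Matrix.one_mulVec, dotProduct_neg, add_zero, zero_add]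
      rw [e1, e2, e3, e5, e6, e7, e8, e9, e10]
      ring
    rw [hval] at hq
    -- expand the goal
    have g1 : x ⬝ᵥ (P * Ac) *ᵥ x = y ⬝ᵥ A *ᵥ x - μ * ((1:ℝ)/2) * (b1 ⬝ᵥ y) * (b1 ⬝ᵥ y) := by
      rw [← mulVec_mulVec, symm_move hPsym, ← hy, hAcx, dotProduct_sub, dotProduct_smul]
      rw [smul_eq_mul, dotProduct_comm y b1]
    have g2 : x ⬝ᵥ (Acᵀ * P) *ᵥ x = y ⬝ᵥ A *ᵥ x - μ * ((1:ℝ)/2) * (b1 ⬝ᵥ y) * (b1 ⬝ᵥ y) := by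
      rw [← mulVec_mulVec, ← hy, trans_dot]
      rw [hAcx, dotProduct_sub, dotProduct_smul, smul_eq_mul, dotProduct_comm y b1]
    have g3 : x ⬝ᵥ (P * ((B2 * B2ᵀ) * P)) *ᵥ x = (b2 ⬝ᵥ y) * (b2 ⬝ᵥ y) := by
      rw [← mulVec_mulVec, symm_move hPsym, ← hy, ← mulVec_mulVec, ← hy, e4]
    have g4 : x ⬝ᵥ (C1ᵀ * C1) *ᵥ x = (c ⬝ᵥ x) * (c ⬝ᵥ x) := by
      rw [← mulVec_mulVec, show C1 = (C1ᵀ)ᵀ from (transpose_transpose C1).symm,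
        colvT_mulVec, transpose_transpose, colv_mulVec, dotProduct_smul]
      rw [smul_eq_mul, show (fun i => C1ᵀ i 0) = c from rfl, dotProduct_comm x c]
    have hgoal : x ⬝ᵥ R *ᵥ x
        = 2 * (y ⬝ᵥ A *ᵥ x) - μ * ((b1 ⬝ᵥ y) * (b1 ⬝ᵥ y))
          + (γd⁻¹)^2 * ((b2 ⬝ᵥ y) * (b2 ⬝ᵥ y)) + (c ⬝ᵥ x) * (c ⬝ᵥ x) := by
      rw [hR_def, add_mulVec, add_mulVec, add_mulVec, smul_mulVec,
        dotProduct_add, dotProduct_add, dotProduct_add, dotProduct_smul,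
        g1, g2, g3, g4]
      simp only [smul_eq_mul]
      ring
    rw [hgoal]
    have hu0 : u 0 = (γd⁻¹)^2 * (b2 ⬝ᵥ y) := rfl
    have hw0 : w 0 = c ⬝ᵥ x := rfl
    rw [hu0, hw0] at hq
    have hgg : γd ^ 2 * ((γd⁻¹)^2 * (b2 ⬝ᵥ y) * ((γd⁻¹)^2 * (b2 ⬝ᵥ y)))
        = (γd⁻¹)^2 * ((b2 ⬝ᵥ y) * (b2 ⬝ᵥ y)) := by
      field_simp
    have hμs : 0 ≤ (μ - α) * ((b1 ⬝ᵥ y) * (b1 ⬝ᵥ y)) :=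
      mul_nonneg (by linarith) (mul_self_nonneg _)
    rw [hgg] at hq
    linarith [hq, hμs]
  have hRle : ∀ x : Fin n → ℝ, x ⬝ᵥ R *ᵥ x ≤ 0 := by
    intro x; by_cases hx : x = 0
    · simp [hx]
    · exact (hR x hx).le
  have hPq : ∀ x : Fin n → ℝ, x ≠ 0 → 0 < x ⬝ᵥ P *ᵥ x := by
    intro x hx
    have := hP.dotProduct_mulVec_pos hx
    simpa using this
  have hPqle : ∀ x : Fin n → ℝ, 0 ≤ x ⬝ᵥ P *ᵥ x := by
    intro x; by_cases hx : x = 0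
    · simp [hx]
    · exact (hPq x hx).le
  set Pc := P.map Complex.ofReal with hPc
  set Acc := Ac.map Complex.ofReal with hAcc
  set B2c := B2.map Complex.ofReal with hB2c
  set C1c := C1.map Complex.ofReal with hC1c
  set Rc := R.map Complex.ofReal with hRc
  have hPcsym : Pcᵀ = Pc := by rw [hPc, ← mapC_transpose, hPsym]
  have hRcmap : Rc = Pc * Acc + Accᵀ * Pc
      + (((γd⁻¹)^2 : ℝ) : ℂ) • (Pc * ((B2c * B2cᵀ) * Pc)) + C1cᵀ * C1c := by
    rw [hRc, hR_def, hPc, hAcc, hB2c, hC1c]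
    simp only [mapC_add, mapC_mul, mapC_smul, mapC_transpose]
  have hsplit0 : ∀ v : Fin n → ℂ, v ≠ 0 →
      (fun i => (v i).re) ≠ 0 ∨ (fun i => (v i).im) ≠ 0 := by
    intro v hv
    by_contra h
    push_neg at h
    obtain ⟨h1, h2⟩ := h
    apply hv
    funext i
    have e1 := congrFun h1 i
    have e2 := congrFun h2 i
    simp only [Pi.zero_apply] at e1 e2 ⊢
    exact Complex.ext e1 e2
  have hqre : ∀ v : Fin n → ℂ, v ≠ 0 → 0 < (star v ⬝ᵥ Pc *ᵥ v).re := by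
    intro v hv
    rw [hPc, re_split]
    rcases hsplit0 v hv with h | h
    · have h1 := hPq _ h; have h2 := hPqle (fun i => (v i).im); linarith
    · have h1 := hPq _ h; have h2 := hPqle (fun i => (v i).re); linarith
  have hRre : ∀ v : Fin n → ℂ, v ≠ 0 → (star v ⬝ᵥ Rc *ᵥ v).re < 0 := by
    intro v hv
    rw [hRc, re_split]
    rcases hsplit0 v hv with h | h
    · have h1 := hR _ h; have h2 := hRle (fun i => (v i).im); linarith
    · have h1 := hR _ h; have h2 := hRle (fun i => (v i).re); linarith
  -- the key identity
  have key : ∀ (v : Fin n → ℂ) (z : ℂ) (b : Fin n → ℝ),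
      Acc *ᵥ v = z • v - (fun i => ((b i : ℝ) : ℂ)) →
      (star v ⬝ᵥ Rc *ᵥ v).re =
        2 * z.re * (star v ⬝ᵥ Pc *ᵥ v).re
        - 2 * ((fun i => ((b i : ℝ) : ℂ)) ⬝ᵥ Pc *ᵥ v).re
        + (γd⁻¹)^2 * Complex.normSq ((fun i => ((B2 i 0 : ℝ) : ℂ)) ⬝ᵥ Pc *ᵥ v)
        + Complex.normSq ((fun j => ((C1 0 j : ℝ) : ℂ)) ⬝ᵥ v) := by
    intro v z b hv
    set bc : Fin n → ℂ := fun i => ((b i : ℝ) : ℂ) with hbc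
    set b2c : Fin n → ℂ := fun i => ((B2 i 0 : ℝ) : ℂ) with hb2c2
    set cc : Fin n → ℂ := fun j => ((C1 0 j : ℝ) : ℂ) with hcc
    set q := star v ⬝ᵥ Pc *ᵥ v with hqdef
    set t := bc ⬝ᵥ Pc *ᵥ v with htdef
    set t2 := b2c ⬝ᵥ Pc *ᵥ v with ht2def
    set g := cc ⬝ᵥ v with hgdef
    have hstarbc : star bc = bc := by
      funext i; simp [hbc, Complex.star_def, Complex.conj_ofReal]
    have hstarb2c : star b2c = b2c := by
      funext i; simp [hb2c2, Complex.star_def, Complex.conj_ofReal]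
    have hstarcc : star cc = cc := by
      funext i; simp [hcc, Complex.star_def, Complex.conj_ofReal]
    have hPcstar : ∀ u : Fin n → ℂ, Pc *ᵥ star u = star (Pc *ᵥ u) := by
      intro u; rw [hPc, mulVec_star]
    have hAccstar : ∀ u : Fin n → ℂ, Acc *ᵥ star u = star (Acc *ᵥ u) := by
      intro u; rw [hAcc, mulVec_star]
    have hconj_t : star v ⬝ᵥ Pc *ᵥ bc = star t := by
      rw [symm_move hPcsym, hPcstar, ← hstarbc, star_dotProduct_star, htdef]
    have hconj_t2 : star v ⬝ᵥ Pc *ᵥ b2c = star t2 := by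
      rw [symm_move hPcsym, hPcstar, ← hstarb2c, star_dotProduct_star, ht2def]
    have i1 : star v ⬝ᵥ (Pc * Acc) *ᵥ v = z * q - star t := by
      rw [← mulVec_mulVec, hv, mulVec_sub, mulVec_smul, dotProduct_sub,
        dotProduct_smul, smul_eq_mul, ← hqdef, hconj_t]
    have i2 : star v ⬝ᵥ (Accᵀ * Pc) *ᵥ v = star z * q - t := by
      rw [← mulVec_mulVec, trans_dot, hAccstar, hv]
      rw [star_sub, star_smul, hstarbc, dotProduct_sub, dotProduct_smul, smul_eq_mul]
      rw [dotProduct_comm (Pc *ᵥ v) (star v), ← hqdef]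
      rw [dotProduct_comm (Pc *ᵥ v) bc, ← htdef]
    have i3 : star v ⬝ᵥ (Pc * ((B2c * B2cᵀ) * Pc)) *ᵥ v = t2 * star t2 := by
      rw [← mulVec_mulVec, ← mulVec_mulVec, ← mulVec_mulVec, colvT_mulVec,
        colv_mulVec]
      have hb2cc : (fun i => B2c i 0) = b2c := rfl
      rw [hb2cc]
      rw [mulVec_smul, dotProduct_smul, smul_eq_mul, hconj_t2, ← ht2def]
    have i4 : star v ⬝ᵥ (C1cᵀ * C1c) *ᵥ v = g * star g := by
      rw [← mulVec_mulVec, show C1c = (C1cᵀ)ᵀ from (transpose_transpose C1c).symm,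
        colvT_mulVec, transpose_transpose, colv_mulVec]
      have hccc : (fun i => C1cᵀ i 0) = cc := rfl
      rw [hccc, dotProduct_smul, smul_eq_mul]
      have : star v ⬝ᵥ cc = star g := by
        rw [← hstarcc, star_dotProduct_star, hgdef]
      rw [this, ← hgdef]
    have itotal : star v ⬝ᵥ Rc *ᵥ v =
        (z * q - star t) + (star z * q - t)
          + (((γd⁻¹)^2 : ℝ) : ℂ) * (t2 * star t2) + g * star g := by
      rw [hRcmap, add_mulVec, add_mulVec, add_mulVec, smul_mulVec,
        dotProduct_add, dotProduct_add, dotProduct_add, dotProduct_smul,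
        smul_eq_mul, i1, i2, i3, i4]
    rw [itotal]
    simp only [Complex.add_re, Complex.sub_re, Complex.mul_re, Complex.ofReal_re,
      Complex.ofReal_im, Complex.star_def, Complex.conj_re, Complex.conj_im,
      Complex.normSq_apply]
    ring
  -- Part 1 : eigenvalues
  have hcharmap : Ac.charpoly.map (algebraMap ℝ ℂ) = Acc.charpoly := by
    have hco : (Complex.ofReal : ℝ → ℂ) = ⇑(algebraMap ℝ ℂ) := rfl
    rw [hAcc, hco, Matrix.charpoly_map]
  have part1 : ∀ z : ℂ, (Ac.charpoly.map (algebraMap ℝ ℂ)).IsRoot z → z.re < 0 := by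
    intro z hz
    have hdet : (z • (1 : Matrix (Fin n) (Fin n) ℂ) - Acc).det = 0 := by
      rw [← eval_charpolyC, ← hcharmap]
      exact hz
    obtain ⟨v, hv0, hvv⟩ := (Matrix.exists_mulVec_eq_zero_iff).mpr hdet
    have hAv : Acc *ᵥ v = z • v - (fun i => (((0 : Fin n → ℝ) i : ℝ) : ℂ)) := by
      rw [sub_mulVec, smul_mulVec, one_mulVec] at hvv
      have h2 := sub_eq_zero.mp hvv
      rw [← h2]
      funext i
      simp
    have hkey := key v z 0 hAv
    have hneg2 := hRre v hv0
    have hqre2 := hqre v hv0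
    rw [hkey] at hneg2
    have ht0 : ((fun i => (((0 : Fin n → ℝ) i : ℝ) : ℂ)) ⬝ᵥ Pc *ᵥ v) = 0 := by
      have : (fun i => (((0 : Fin n → ℝ) i : ℝ) : ℂ)) = (0 : Fin n → ℂ) := by
        funext i; simp
      rw [this, zero_dotProduct]
    rw [ht0] at hneg2
    simp only [Complex.zero_re] at hneg2
    nlinarith [Complex.normSq_nonneg ((fun i => ((B2 i 0 : ℝ) : ℂ)) ⬝ᵥ Pc *ᵥ v),
      Complex.normSq_nonneg ((fun j => ((C1 0 j : ℝ) : ℂ)) ⬝ᵥ v), hqre2, hneg2]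
  refine ⟨part1, fun ω => ?_⟩
  have hdetunit : IsUnit ((Complex.I * (ω : ℂ)) • (1 : Matrix (Fin n) (Fin n) ℂ) - Acc).det := by
    rw [isUnit_iff_ne_zero]
    intro h0
    have hlt : (Complex.I * (ω : ℂ)).re < 0 := by
      apply part1
      rw [Polynomial.IsRoot, hcharmap, eval_charpolyC]
      exact h0
    simp at hlt
  refine ⟨hdetunit, ?_⟩
  set D := (Complex.I * (ω : ℂ)) • (1 : Matrix (Fin n) (Fin n) ℂ) - Acc with hD
  have hDinv_eq : (Complex.I * (ω : ℂ)) • (1 : Matrix (Fin n) (Fin n) ℂ)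
      - A.map Complex.ofReal + μ • (B1 * kT).map Complex.ofReal = D := by
    rw [hD, hAcc, hAc_def]
    ext i j
    simp [Matrix.map_apply, Matrix.sub_apply, Matrix.add_apply, Matrix.smul_apply,
      Complex.ofReal_sub, Complex.ofReal_mul]
    ring
  rw [hDinv_eq]
  set v := D⁻¹ *ᵥ (fun i => ((B2 i 0 : ℝ) : ℂ)) with hvdef
  have hDv : D *ᵥ v = (fun i => ((B2 i 0 : ℝ) : ℂ)) := by
    rw [hvdef, mulVec_mulVec, Matrix.mul_nonsing_inv _ hdetunit, one_mulVec]
  have hAcv : Acc *ᵥ v = (Complex.I * (ω : ℂ)) • v - (fun i => ((B2 i 0 : ℝ) : ℂ)) := by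
    rw [← hDv, hD, sub_mulVec, smul_mulVec, one_mulVec, sub_sub_cancel]
  have hg : (C1c * D⁻¹ * B2c) 0 0 = (fun j => ((C1 0 j : ℝ) : ℂ)) ⬝ᵥ v := by
    rw [Matrix.mul_assoc, Matrix.mul_apply]
    rw [hvdef]
    simp only [Matrix.mul_apply, mulVec, dotProduct, hC1c, hB2c, Matrix.map_apply]
  rw [hg]
  clear_value v
  by_cases hv0 : v = 0
  · simp [hv0, hγd]
  · have hkey := key v (Complex.I * (ω : ℂ)) (fun i => B2 i 0) hAcv
    have hneg2 := hRre v hv0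
    rw [hkey] at hneg2
    have hre0 : (Complex.I * (ω : ℂ)).re = 0 := by simp
    rw [hre0] at hneg2
    set t := (fun i => ((B2 i 0 : ℝ) : ℂ)) ⬝ᵥ Pc *ᵥ v with htdef
    set g := (fun j => ((C1 0 j : ℝ) : ℂ)) ⬝ᵥ v with hgdef
    clear_value t g
    rw [Complex.normSq_apply, Complex.normSq_apply] at hneg2
    have hginv : γd⁻¹ * γd = 1 := inv_mul_cancel₀ hγd'
    have hsq : (γd⁻¹ * t.re - γd)^2 = (γd⁻¹)^2 * (t.re * t.re) - 2 * t.re + γd ^ 2 := by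
      field_simp
      ring
    have h2t : 2 * t.re ≤ (γd⁻¹)^2 * (t.re * t.re) + γd ^ 2 := by
      linarith [sq_nonneg (γd⁻¹ * t.re - γd), hsq]
    have habs : ‖g‖ ^ 2 = Complex.normSq g := Complex.sq_norm g
    have hfin : Complex.normSq g < γd ^ 2 := by
      rw [Complex.normSq_apply]
      linarith [hneg2, h2t, mul_nonneg (sq_nonneg γd⁻¹) (mul_self_nonneg t.im)]
    have := lt_of_pow_lt_pow_left₀ 2 hγd.le (by rw [habs]; exact hfin)
    exact this

end
end
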